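/- arXiv:2004.06152 — 15 statements merged into one kernel-verified Lean document; each statement's English description precedes it below -/
import Mathlib

section
/- Let λ0, λ2, M be positive reals with √(λ0/λ2) ≤ M, and let β ∈ ℝ satisfy |β| ≤ M. Then the infimum of λ0·z + λ2·s over all pairs (s, z) with s ≥ 0, z ∈ [0,1], β² ≤ s·z, and |β| ≤ M·z equals 2λ0·B(β·√(λ2/λ0)), where B is the reverse Huber function. -/
/-- The reverse Huber function: `B(t) = |t|` for `|t| ≤ 1` and `B(t) = (t² + 1)/2` otherwise. -/
noncomputable def revHuber (t : ℝ) : ℝ := if |t| ≤ 1 then |t| else (t ^ 2 + 1) / 2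

/-!
With `r = √(λ₂/λ₀)` and `t = β r` one has `λ₂ = λ₀ r²`, and for `z > 0` the constraint
`β² ≤ s z` gives `z (λ₀ z + λ₂ s) ≥ λ₀ (z² + t²)`. Hence the infimum is `λ₀` times that of the
perspective `(z² + t²) / z` over `z ∈ (0, 1]`, which is `2 B(t)`: by AM-GM it is minimised at
`z = |t|` when `|t| ≤ 1`, and at the endpoint `z = 1` otherwise. The condition `√(λ₀/λ₂) ≤ M`
makes the constraint `|β| ≤ M z` harmless at the minimiser `z = min |t| 1`.
-/

@[simp]
lemma revHuber_zero : revHuber 0 = 0 := by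
  simp [revHuber]

lemma two_mul_revHuber_mul_le (t : ℝ) {z : ℝ} (hz1 : z ≤ 1) :
    2 * revHuber t * z ≤ z ^ 2 + t ^ 2 := by
  unfold revHuber
  split_ifs with ht
  · nlinarith [sq_nonneg (z - |t|), sq_abs t]
  · -- `z² + t² - (t² + 1) z = (1 - z) (t² - z)`
    have ht2 : 1 < t ^ 2 := by nlinarith [sq_abs t]
    nlinarith [mul_nonneg (sub_nonneg.2 hz1) (by linarith : 0 ≤ t ^ 2 - z)]

lemma two_mul_revHuber_mul_min_abs_one (t : ℝ) :
    2 * revHuber t * min |t| 1 = min |t| 1 ^ 2 + t ^ 2 := by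
  unfold revHuber
  split_ifs with ht
  · rw [min_eq_left ht, ← sq_abs t]
    ring
  · rw [min_eq_right (le_of_not_ge ht)]
    ring

section Perspective

variable {l0 l2 r : ℝ}

lemma two_mul_mul_revHuber_le (hl0 : 0 ≤ l0) (hl2 : l2 = l0 * r ^ 2) {β s z : ℝ}
    (hs : 0 ≤ s) (hz0 : 0 ≤ z) (hz1 : z ≤ 1) (hβ : β ^ 2 ≤ s * z) :
    2 * l0 * revHuber (β * r) ≤ l0 * z + l2 * s := by
  subst hl2
  rcases hz0.eq_or_lt with rfl | hz
  · obtain rfl : β = 0 := by simpa using hβ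
    simp only [zero_mul, revHuber_zero, mul_zero, zero_add]
    positivity
  refine le_of_mul_le_mul_right ?_ hz
  calc 2 * l0 * revHuber (β * r) * z = l0 * (2 * revHuber (β * r) * z) := by ring
    _ ≤ l0 * (z ^ 2 + (β * r) ^ 2) := by
        gcongr
        exact two_mul_revHuber_mul_le _ hz1
    _ = l0 * z ^ 2 + l0 * r ^ 2 * β ^ 2 := by ring
    _ ≤ l0 * z ^ 2 + l0 * r ^ 2 * (s * z) := by gcongr
    _ = (l0 * z + l0 * r ^ 2 * s) * z := by ring

lemma exists_feasible_eq_two_mul_mul_revHuber (hl2 : l2 = l0 * r ^ 2) {M β : ℝ}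
    (hMr : 1 ≤ M * |r|) (hβ : |β| ≤ M) :
    ∃ s z : ℝ, 0 ≤ s ∧ 0 ≤ z ∧ z ≤ 1 ∧ β ^ 2 ≤ s * z ∧ |β| ≤ M * z ∧
      2 * l0 * revHuber (β * r) = l0 * z + l2 * s := by
  rcases eq_or_ne β 0 with rfl | hβ0
  · exact ⟨0, 0, le_rfl, le_rfl, zero_le_one, by simp, by simp, by simp⟩
  have hr0 : r ≠ 0 := by
    rintro rfl
    norm_num at hMr
  set z := min |β * r| 1 with hz
  have hzpos : 0 < z := lt_min (abs_pos.2 (mul_ne_zero hβ0 hr0)) one_pos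
  refine ⟨β ^ 2 / z, z, by positivity, hzpos.le, min_le_right _ _,
    (div_mul_cancel₀ _ hzpos.ne').ge, ?_, ?_⟩
  · rw [hz, mul_min_of_nonneg _ _ (hβ.trans' (abs_nonneg β)), le_min_iff, abs_mul]
    constructor
    · nlinarith [abs_nonneg β]
    · simpa using hβ
  · have key := two_mul_revHuber_mul_min_abs_one (β * r)
    rw [← hz] at key
    rw [hl2]
    field_simp
    linear_combination l0 * key

end Perspective

theorem perspective_pointwise_le_general
    (l0 l2 M β : ℝ) (hl0 : 0 < l0) (hl2 : 0 < l2)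
    (hcase : Real.sqrt (l0 / l2) ≤ M) (hβ : |β| ≤ M) :
    sInf {v : ℝ | ∃ s z : ℝ, 0 ≤ s ∧ 0 ≤ z ∧ z ≤ 1 ∧ β ^ 2 ≤ s * z ∧ |β| ≤ M * z ∧
        v = l0 * z + l2 * s} =
      2 * l0 * revHuber (β * Real.sqrt (l2 / l0)) := by
  set r := Real.sqrt (l2 / l0)
  have hr : 0 < r := Real.sqrt_pos.2 (div_pos hl2 hl0)
  have hl2r : l2 = l0 * r ^ 2 := by
    rw [Real.sq_sqrt (div_pos hl2 hl0).le]
    field_simp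
  have hMr : 1 ≤ M * |r| := by
    rw [abs_of_pos hr, ← inv_le_iff_one_le_mul₀ hr, ← Real.sqrt_inv, inv_div]
    exact hcase
  refine IsLeast.csInf_eq ⟨?_, ?_⟩
  · exact exists_feasible_eq_two_mul_mul_revHuber hl2r hMr hβ
  · rintro v ⟨s, z, hs, hz0, hz1, hβz, -, rfl⟩
    exact two_mul_mul_revHuber_le hl0.le hl2r hs hz0 hz1 hβz

theorem perspective_pointwise_le
    (l0 l2 M β : ℝ) (hl0 : 0 < l0) (hl2 : 0 < l2) (hM : 0 < M)
    (hcase : Real.sqrt (l0 / l2) ≤ M) (hβ : |β| ≤ M) :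
    sInf {v : ℝ | ∃ s z : ℝ, 0 ≤ s ∧ 0 ≤ z ∧ z ≤ 1 ∧ β ^ 2 ≤ s * z ∧ |β| ≤ M * z ∧
        v = l0 * z + l2 * s} =
      2 * l0 * revHuber (β * Real.sqrt (l2 / l0)) :=
  perspective_pointwise_le_general l0 l2 M β hl0 hl2 hcase hβ
end

section
/- Let λ0, λ2, M be positive reals with √(λ0/λ2) > M, and let β ∈ ℝ satisfy |β| ≤ M. Then the infimum of λ0·z + λ2·s over all pairs (s, z) with s ≥ 0, z ∈ [0,1], β² ≤ s·z, and |β| ≤ M·z equals (λ0/M + λ2·M)·|β|. -/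
/-!
Along the constraints, `l2 * s ≥ l2 * β² / z`, and `z ↦ l0 * z + l2 * β² / z` is minimised
at `z = |β| * √(l2 / l0)`. When `M < √(l0 / l2)` this lies below the constraint `z ≥ |β| / M`,
so the infimum is attained at the corner `z = |β| / M`, `s = M * |β|`.
-/

namespace Perspective

variable {a b m t s z : ℝ}

lemma mul_le_of_feasible (hm : 0 < m) (hb : 0 ≤ b) (hbm : b * m ^ 2 ≤ a) (hs : 0 ≤ s)
    (ht : 0 ≤ t) (htz : t ≤ m * z) (hsz : t ^ 2 ≤ s * z) :
    (a + b * m ^ 2) * t ≤ m * (a * z + b * s) := by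
  rcases ht.eq_or_lt with rfl | ht_pos
  · have hz : 0 ≤ z := nonneg_of_mul_nonneg_right htz hm
    have ha : 0 ≤ a := (by positivity : 0 ≤ b * m ^ 2).trans hbm
    rw [mul_zero]
    positivity
  have hz : 0 < z := pos_of_mul_pos_right (ht_pos.trans_le htz) hm.le
  have hcorner : b * m * t ≤ a * z := by
    nlinarith [mul_le_mul_of_nonneg_left htz (mul_nonneg hb hm.le)]
  -- `m z (a z + b t² / z) - (a + b m²) t z = (m z - t) (a z - b m t)`
  suffices (a + b * m ^ 2) * t * z ≤ m * (a * z + b * s) * z from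
    le_of_mul_le_mul_right this hz
  nlinarith [mul_nonneg (sub_nonneg.mpr htz) (sub_nonneg.mpr hcorner),
    mul_le_mul_of_nonneg_left hsz (mul_nonneg hb hm.le)]

lemma isLeast_values {β : ℝ} (hm : 0 < m) (hb : 0 ≤ b) (hbm : b * m ^ 2 ≤ a)
    (hβ : |β| ≤ m) :
    IsLeast {v : ℝ | ∃ s z : ℝ, 0 ≤ s ∧ 0 ≤ z ∧ z ≤ 1 ∧ β ^ 2 ≤ s * z ∧ |β| ≤ m * z ∧
        v = a * z + b * s}
      ((a / m + b * m) * |β|) := by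
  constructor
  · refine ⟨m * |β|, |β| / m, by positivity, by positivity, (div_le_one hm).mpr hβ,
      ?_, ?_, ?_⟩
    · rw [← sq_abs β]; field_simp; rfl
    · rw [mul_div_cancel₀ _ hm.ne']
    · field_simp
  · rintro v ⟨s, z, hs, -, -, hsz, hβz, rfl⟩
    have := mul_le_of_feasible hm hb hbm hs (abs_nonneg β) hβz (by rwa [sq_abs])
    rw [div_add' _ _ _ hm.ne', div_mul_eq_mul_div, div_le_iff₀ hm]
    linarith

end Perspective

theorem perspective_pointwise_gt_general
    (l0 l2 M β : ℝ) (hl2 : 0 < l2) (hM : 0 < M)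
    (hcase : M < Real.sqrt (l0 / l2)) (hβ : |β| ≤ M) :
    sInf {v : ℝ | ∃ s z : ℝ, 0 ≤ s ∧ 0 ≤ z ∧ z ≤ 1 ∧ β ^ 2 ≤ s * z ∧ |β| ≤ M * z ∧
        v = l0 * z + l2 * s} =
      (l0 / M + l2 * M) * |β| := by
  have hcorner : l2 * M ^ 2 ≤ l0 := by
    rw [mul_comm, ← le_div_iff₀ hl2]
    exact ((Real.lt_sqrt hM.le).mp hcase).le
  exact (Perspective.isLeast_values hM hl2.le hcorner hβ).csInf_eq

theorem perspective_pointwise_gt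
    (l0 l2 M β : ℝ) (hl0 : 0 < l0) (hl2 : 0 < l2) (hM : 0 < M)
    (hcase : M < Real.sqrt (l0 / l2)) (hβ : |β| ≤ M) :
    sInf {v : ℝ | ∃ s z : ℝ, 0 ≤ s ∧ 0 ≤ z ∧ z ≤ 1 ∧ β ^ 2 ≤ s * z ∧ |β| ≤ M * z ∧
        v = l0 * z + l2 * s} =
      (l0 / M + l2 * M) * |β| :=
  perspective_pointwise_gt_general l0 l2 M β hl2 hM hcase hβ
end

section
/- The infimum over all triples (β, s, z) ∈ ℝᵖ × ℝᵖ × ℝᵖ of (1/2)‖y − Xβ‖₂² + λ0·Σ_{i=1}^p z_i + λ2·Σ_{i=1}^p s_i subject to β_i² ≤ s_i·z_i, −M·z_i ≤ β_i ≤ M·z_i, z_i ∈ [0,1], and s_i ≥ 0 for every i ∈ [p], is equal to V_PR(M) = inf{F(β) : β ∈ ℝᵖ, ‖β‖∞ ≤ M}. -/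
/-- The penalty `ψ(β; λ0, λ2, M)`. -/
noncomputable def psi (l0 l2 M b : ℝ) : ℝ :=
  if Real.sqrt (l0 / l2) ≤ M then 2 * l0 * revHuber (b * Real.sqrt (l2 / l0))
  else (l0 / M + l2 * M) * |b|

/-- The objective `F(β)` of the reduced relaxation. -/
noncomputable def Fobj (n p : ℕ) (X : Matrix (Fin n) (Fin p) ℝ) (y : Fin n → ℝ)
    (l0 l2 M : ℝ) (β : Fin p → ℝ) : ℝ :=
  (1 / 2) * ∑ j, (y j - ∑ i, X j i * β i) ^ 2 + ∑ i, psi l0 l2 M (β i)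

structure RelaxFeasible (M b s z : ℝ) : Prop where
  sq_le_mul : b ^ 2 ≤ s * z
  abs_le_mul : |b| ≤ M * z
  z_nonneg : 0 ≤ z
  z_le_one : z ≤ 1
  s_nonneg : 0 ≤ s

lemma RelaxFeasible.abs_le {M b s z : ℝ} (h : RelaxFeasible M b s z) (hM : 0 ≤ M) : |b| ≤ M :=
  h.abs_le_mul.trans (mul_le_of_le_one_right hM h.z_le_one)

lemma exists_pos_eq_mul_sq {l0 l2 : ℝ} (hl0 : 0 < l0) (hl2 : 0 < l2) :
    ∃ u, 0 < u ∧ l0 = l2 * u ^ 2 :=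
  ⟨√(l0 / l2), by positivity, by rw [Real.sq_sqrt (by positivity)]; field_simp⟩

lemma psi_mul_sq {l2 u M : ℝ} (b : ℝ) (hl2 : 0 < l2) (hu : 0 < u) :
    psi (l2 * u ^ 2) l2 M b =
      if u ≤ M then (if |b| ≤ u then 2 * l2 * u * |b| else l2 * (b ^ 2 + u ^ 2))
      else l2 * (u ^ 2 / M + M) * |b| := by
  have hsqrt : √(l2 * u ^ 2 / l2) = u := by
    rw [mul_div_cancel_left₀ _ hl2.ne', Real.sqrt_sq hu.le]
  have hsqrt_inv : √(l2 / (l2 * u ^ 2)) = u⁻¹ := by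
    rw [← inv_div, Real.sqrt_inv, hsqrt]
  have habs : |b * u⁻¹| ≤ 1 ↔ |b| ≤ u := by
    rw [abs_mul, abs_inv, abs_of_pos hu, ← div_eq_mul_inv, div_le_one hu]
  unfold psi revHuber
  simp only [hsqrt, hsqrt_inv, habs]
  split_ifs
  · rw [abs_mul, abs_inv, abs_of_pos hu]; field_simp
  · field_simp
  · ring

lemma psi_zero (l0 l2 M : ℝ) : psi l0 l2 M 0 = 0 := by
  simp [psi, revHuber]

lemma two_mul_abs_le_of_sq_le_mul {b s z : ℝ} (u : ℝ) (hz : 0 < z) (h : b ^ 2 ≤ s * z) :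
    2 * u * |b| ≤ u ^ 2 * z + s := by
  nlinarith [sq_nonneg (u * z - |b|), sq_abs b]

lemma sq_add_sq_le_of_sq_le_mul {b s z u : ℝ} (hz : 0 < z) (hz1 : z ≤ 1) (h : b ^ 2 ≤ s * z)
    (hu : u ^ 2 ≤ b ^ 2) : b ^ 2 + u ^ 2 ≤ u ^ 2 * z + s := by
  have : 0 ≤ (1 - z) * (b ^ 2 - u ^ 2 * z) := by
    apply mul_nonneg <;> nlinarith
  nlinarith

lemma mul_abs_le_of_sq_le_mul {M b s z u : ℝ} (hM : 0 < M) (hMu : M ≤ u) (hz : 0 < z)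
    (h : b ^ 2 ≤ s * z) (hb : |b| ≤ M * z) : (u ^ 2 / M + M) * |b| ≤ u ^ 2 * z + s := by
  have hMu2 : M ^ 2 ≤ u ^ 2 := pow_le_pow_left₀ hM.le hMu 2
  have : 0 ≤ (M * z - |b|) * (u ^ 2 * z - M * |b|) := by
    apply mul_nonneg <;>
      nlinarith [mul_le_mul_of_nonneg_right hMu2 hz.le, mul_le_mul_of_nonneg_left hb hM.le]
  rw [div_add' _ _ _ hM.ne', div_mul_eq_mul_div, div_le_iff₀ hM]
  nlinarith [sq_abs b]

lemma psi_le_of_relaxFeasible {l0 l2 M b s z : ℝ} (hl0 : 0 < l0) (hl2 : 0 < l2) (hM : 0 < M)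
    (h : RelaxFeasible M b s z) : psi l0 l2 M b ≤ l0 * z + l2 * s := by
  obtain ⟨u, hu, rfl⟩ := exists_pos_eq_mul_sq hl0 hl2
  rcases h.z_nonneg.eq_or_lt with rfl | hz
  · have hb : b = 0 := abs_nonpos_iff.mp (by simpa using h.abs_le_mul)
    rw [hb, psi_zero, mul_zero, zero_add]
    exact mul_nonneg hl2.le h.s_nonneg
  rw [psi_mul_sq b hl2 hu]
  split_ifs with huM hbu
  · nlinarith [two_mul_abs_le_of_sq_le_mul u hz h.sq_le_mul]
  · have hub : u ^ 2 ≤ b ^ 2 := by nlinarith [sq_abs b]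
    nlinarith [sq_add_sq_le_of_sq_le_mul hz h.z_le_one h.sq_le_mul hub]
  · nlinarith [mul_abs_le_of_sq_le_mul hM (not_le.mp huM).le hz h.sq_le_mul h.abs_le_mul]

lemma exists_relaxFeasible_eq_psi {l0 l2 M b : ℝ} (hl0 : 0 < l0) (hl2 : 0 < l2) (hM : 0 < M)
    (hb : |b| ≤ M) : ∃ s z, RelaxFeasible M b s z ∧ l0 * z + l2 * s = psi l0 l2 M b := by
  obtain ⟨u, hu, rfl⟩ := exists_pos_eq_mul_sq hl0 hl2
  rw [psi_mul_sq b hl2 hu]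
  split_ifs with huM hbu
  · refine ⟨u * |b|, |b| / u, ⟨?_, ?_, by positivity, (div_le_one hu).mpr hbu, by positivity⟩, ?_⟩
    · field_simp; rw [sq_abs]
    · rw [mul_div_assoc', le_div_iff₀ hu]; nlinarith [abs_nonneg b]
    · field_simp; ring
  · exact ⟨b ^ 2, 1, ⟨by rw [mul_one], by rw [mul_one]; exact hb, zero_le_one, le_rfl,
      sq_nonneg b⟩, by ring⟩
  · refine ⟨M * |b|, |b| / M, ⟨?_, ?_, by positivity, (div_le_one hM).mpr hb, by positivity⟩, ?_⟩
    · field_simp; rw [sq_abs]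
    · rw [mul_div_cancel₀ _ hM.ne']
    · field_simp

theorem reduced_relaxation
    (n p : ℕ) (X : Matrix (Fin n) (Fin p) ℝ) (y : Fin n → ℝ)
    (l0 l2 M : ℝ) (hl0 : 0 < l0) (hl2 : 0 < l2) (hM : 0 < M) :
    sInf {v : ℝ | ∃ β s z : Fin p → ℝ,
        (∀ i, (β i) ^ 2 ≤ s i * z i) ∧
        (∀ i, -(M * z i) ≤ β i ∧ β i ≤ M * z i) ∧
        (∀ i, 0 ≤ z i ∧ z i ≤ 1) ∧ (∀ i, 0 ≤ s i) ∧
        v = (1 / 2) * ∑ j, (y j - ∑ i, X j i * β i) ^ 2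
            + l0 * ∑ i, z i + l2 * ∑ i, s i} =
      sInf {v : ℝ | ∃ β : Fin p → ℝ, (∀ i, |β i| ≤ M) ∧ v = Fobj n p X y l0 l2 M β} := by
  apply csInf_eq_csInf_of_forall_exists_le
  · rintro _ ⟨β, s, z, hsq, hbox, hz, hs, rfl⟩
    have hfeas i : RelaxFeasible M (β i) (s i) (z i) :=
      ⟨hsq i, abs_le.mpr (hbox i), (hz i).1, (hz i).2, hs i⟩
    refine ⟨_, ⟨β, fun i => (hfeas i).abs_le hM.le, rfl⟩, ?_⟩
    have hpsi : ∑ i, psi l0 l2 M (β i) ≤ l0 * ∑ i, z i + l2 * ∑ i, s i := by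
      rw [Finset.mul_sum, Finset.mul_sum, ← Finset.sum_add_distrib]
      exact Finset.sum_le_sum fun i _ => psi_le_of_relaxFeasible hl0 hl2 hM (hfeas i)
    unfold Fobj
    linarith
  · rintro _ ⟨β, hβ, rfl⟩
    choose s z hfeas hpsi using fun i => exists_relaxFeasible_eq_psi hl0 hl2 hM (hβ i)
    refine ⟨_, ⟨β, s, z, fun i => (hfeas i).sq_le_mul, fun i => abs_le.mp (hfeas i).abs_le_mul,
      fun i => ⟨(hfeas i).z_nonneg, (hfeas i).z_le_one⟩, fun i => (hfeas i).s_nonneg, rfl⟩,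
      le_of_eq ?_⟩
    simp only [Fobj, ← hpsi, Finset.sum_add_distrib, ← Finset.mul_sum]
    ring
end

section
/- Suppose √(λ0/λ2) > M and β* is a minimizer of F over {β ∈ ℝᵖ : ‖β‖∞ ≤ M}. Then V_PR(M) ≥ V_B(M) + λ2·(M·‖β*‖₁ − ‖β*‖₂²). -/
/-- The objective `H(β)` of the Big-M interval relaxation. -/
noncomputable def Hobj (n p : ℕ) (X : Matrix (Fin n) (Fin p) ℝ) (y : Fin n → ℝ)
    (l0 l2 M : ℝ) (β : Fin p → ℝ) : ℝ :=
  (1 / 2) * ∑ j, (y j - ∑ i, X j i * β i) ^ 2 + ∑ i, ((l0 / M) * |β i| + l2 * (β i) ^ 2)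

theorem VPR_ge_VB
    (n p : ℕ) (X : Matrix (Fin n) (Fin p) ℝ) (y : Fin n → ℝ)
    (l0 l2 M : ℝ) (hl0 : 0 < l0) (hl2 : 0 < l2) (hM : 0 < M)
    (hcase : M < Real.sqrt (l0 / l2))
    (βs : Fin p → ℝ) (hβs : ∀ i, |βs i| ≤ M)
    (hmin : ∀ β : Fin p → ℝ, (∀ i, |β i| ≤ M) → Fobj n p X y l0 l2 M βs ≤ Fobj n p X y l0 l2 M β) :
    sInf {v : ℝ | ∃ β : Fin p → ℝ, (∀ i, |β i| ≤ M) ∧ v = Fobj n p X y l0 l2 M β} ≥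
      sInf {v : ℝ | ∃ β : Fin p → ℝ, (∀ i, |β i| ≤ M) ∧ v = Hobj n p X y l0 l2 M β}
        + l2 * (M * ∑ i, |βs i| - ∑ i, (βs i) ^ 2) := by
  set c : ℝ := l2 * (M * ∑ i, |βs i| - ∑ i, (βs i) ^ 2) with hc
  set SF := {v : ℝ | ∃ β : Fin p → ℝ, (∀ i, |β i| ≤ M) ∧ v = Fobj n p X y l0 l2 M β}
  set SH := {v : ℝ | ∃ β : Fin p → ℝ, (∀ i, |β i| ≤ M) ∧ v = Hobj n p X y l0 l2 M β}
  have hne : SF.Nonempty := ⟨Fobj n p X y l0 l2 M βs, βs, hβs, rfl⟩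
  have h1 : Fobj n p X y l0 l2 M βs ≤ sInf SF := by
    apply le_csInf hne
    rintro v ⟨β, hβ, rfl⟩
    exact hmin β hβ
  have hbdd : BddBelow SH := by
    refine ⟨0, ?_⟩
    rintro v ⟨β, hβ, rfl⟩
    unfold Hobj
    have h1 : (0:ℝ) ≤ (1 / 2) * ∑ j, (y j - ∑ i, X j i * β i) ^ 2 := by
      positivity
    have h2 : (0:ℝ) ≤ ∑ i, ((l0 / M) * |β i| + l2 * (β i) ^ 2) := by
      apply Finset.sum_nonneg
      intro i _
      positivity
    linarith
  have h2 : sInf SH ≤ Hobj n p X y l0 l2 M βs :=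
    csInf_le hbdd ⟨βs, hβs, rfl⟩
  have hFH : Fobj n p X y l0 l2 M βs = Hobj n p X y l0 l2 M βs + c := by
    unfold Fobj Hobj
    have hpsi : ∀ b : ℝ, psi l0 l2 M b = (l0 / M + l2 * M) * |b| := by
      intro b
      unfold psi
      rw [if_neg (not_le.mpr hcase)]
    simp only [hpsi]
    rw [hc, mul_sub]
    simp only [Finset.mul_sum]
    rw [← Finset.sum_sub_distrib, add_assoc, ← Finset.sum_add_distrib]
    congr 1
    apply Finset.sum_congr rfl
    intro i _
    ring
  linarith
end

section
/- Suppose √(λ0/λ2) > M and β* is a minimizer of F over {β ∈ ℝᵖ : ‖β‖∞ ≤ M}. Let h(λ0, λ2, M) = λ0/M + λ2·M − 2√(λ0·λ2). Then V_PR(M) ≥ V_PR(∞) + h(λ0, λ2, M)·‖β*‖₁. -/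
/-- The objective `G(β)` of the relaxation of `PR(∞)`. -/
noncomputable def Gobj (n p : ℕ) (X : Matrix (Fin n) (Fin p) ℝ) (y : Fin n → ℝ)
    (l0 l2 : ℝ) (β : Fin p → ℝ) : ℝ :=
  (1 / 2) * ∑ j, (y j - ∑ i, X j i * β i) ^ 2
    + ∑ i, 2 * l0 * revHuber (β i * Real.sqrt (l2 / l0))

lemma revHuber_nonneg (t : ℝ) : 0 ≤ revHuber t := by
  unfold revHuber
  split <;> positivity

lemma key_eq (l0 l2 M b : ℝ) (hl0 : 0 < l0) (hl2 : 0 < l2)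
    (hcase : M < Real.sqrt (l0 / l2)) (hb : |b| ≤ M) :
    2 * l0 * revHuber (b * Real.sqrt (l2 / l0)) = 2 * Real.sqrt (l0 * l2) * |b| := by
  have hs : Real.sqrt (l0 / l2) * Real.sqrt (l2 / l0) = 1 := by
    rw [← Real.sqrt_mul (by positivity),
      show l0 / l2 * (l2 / l0) = 1 by field_simp, Real.sqrt_one]
  have habs : |b * Real.sqrt (l2 / l0)| = |b| * Real.sqrt (l2 / l0) := by
    rw [abs_mul, abs_of_nonneg (Real.sqrt_nonneg _)]
  have hle : |b * Real.sqrt (l2 / l0)| ≤ 1 := by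
    rw [habs, ← hs]
    exact mul_le_mul_of_nonneg_right (hb.trans hcase.le) (Real.sqrt_nonneg _)
  rw [revHuber, if_pos hle, habs]
  have hls : l0 * Real.sqrt (l2 / l0) = Real.sqrt (l0 * l2) := by
    nth_rewrite 1 [← Real.sqrt_sq hl0.le]
    rw [← Real.sqrt_mul (by positivity)]
    congr 1
    field_simp
  rw [← hls]; ring

theorem VPRM_ge_VPRinf
    (n p : ℕ) (X : Matrix (Fin n) (Fin p) ℝ) (y : Fin n → ℝ)
    (l0 l2 M : ℝ) (hl0 : 0 < l0) (hl2 : 0 < l2) (hM : 0 < M)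
    (hcase : M < Real.sqrt (l0 / l2))
    (βs : Fin p → ℝ) (hβs : ∀ i, |βs i| ≤ M)
    (hmin : ∀ β : Fin p → ℝ, (∀ i, |β i| ≤ M) → Fobj n p X y l0 l2 M βs ≤ Fobj n p X y l0 l2 M β) :
    sInf {v : ℝ | ∃ β : Fin p → ℝ, (∀ i, |β i| ≤ M) ∧ v = Fobj n p X y l0 l2 M β} ≥
      sInf {v : ℝ | ∃ β : Fin p → ℝ, v = Gobj n p X y l0 l2 β}
        + (l0 / M + l2 * M - 2 * Real.sqrt (l0 * l2)) * ∑ i, |βs i| := by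
  set h : ℝ := l0 / M + l2 * M - 2 * Real.sqrt (l0 * l2) with hh
  clear_value h
  have hne : ¬ Real.sqrt (l0 / l2) ≤ M := not_le.mpr hcase
  -- F(βs) = G(βs) + h * ‖βs‖₁
  have hsum : ∀ i : Fin p, psi l0 l2 M (βs i) =
      2 * l0 * revHuber (βs i * Real.sqrt (l2 / l0)) + h * |βs i| := by
    intro i
    rw [psi, if_neg hne, key_eq l0 l2 M (βs i) hl0 hl2 hcase (hβs i), hh]
    ring
  have hFeq : Fobj n p X y l0 l2 M βs = Gobj n p X y l0 l2 βs + h * ∑ i, |βs i| := by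
    have hps : ∑ i, psi l0 l2 M (βs i) =
        (∑ i, 2 * l0 * revHuber (βs i * Real.sqrt (l2 / l0))) + h * ∑ i, |βs i| := by
      rw [Finset.mul_sum, ← Finset.sum_add_distrib]
      exact Finset.sum_congr rfl (fun i _ => hsum i)
    unfold Fobj Gobj
    rw [hps]
    ring
  -- G is nonnegative
  have hGnn : ∀ β : Fin p → ℝ, 0 ≤ Gobj n p X y l0 l2 β := by
    intro β
    unfold Gobj
    have h1 : (0:ℝ) ≤ (1 / 2) * ∑ j, (y j - ∑ i, X j i * β i) ^ 2 := by positivity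
    have h2 : (0:ℝ) ≤ ∑ i, 2 * l0 * revHuber (β i * Real.sqrt (l2 / l0)) :=
      Finset.sum_nonneg fun i _ => by
        have := revHuber_nonneg (β i * Real.sqrt (l2 / l0))
        positivity
    linarith
  have h1 : Fobj n p X y l0 l2 M βs ≤
      sInf {v : ℝ | ∃ β : Fin p → ℝ, (∀ i, |β i| ≤ M) ∧ v = Fobj n p X y l0 l2 M β} := by
    refine le_csInf ⟨Fobj n p X y l0 l2 M βs, βs, hβs, rfl⟩ ?_
    rintro v ⟨β, hβ, rfl⟩
    exact hmin β hβ
  have h2 : sInf {v : ℝ | ∃ β : Fin p → ℝ, v = Gobj n p X y l0 l2 β} ≤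
      Gobj n p X y l0 l2 βs := by
    apply csInf_le
    · exact ⟨0, by rintro v ⟨β, rfl⟩; exact hGnn β⟩
    · exact ⟨βs, rfl⟩
  linarith [h1, h2, hFeq]
end

section
/- If 0 < M ≤ (1/2)·√(λ0/λ2), then V_B(M) ≥ V_PR(∞). -/
lemma key_term (l0 l2 M t : ℝ) (hl0 : 0 < l0) (hl2 : 0 < l2) (hM : 0 < M)
    (hcase : M ≤ (1 / 2) * Real.sqrt (l0 / l2)) (ht : |t| ≤ M) :
    2 * l0 * revHuber (t * Real.sqrt (l2 / l0)) ≤ (l0 / M) * |t| + l2 * t ^ 2 := by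
  set s := Real.sqrt (l2 / l0) with hs
  have hspos : 0 < s := Real.sqrt_pos.mpr (by positivity)
  have hmul : Real.sqrt (l0 / l2) * s = 1 := by
    rw [hs, ← Real.sqrt_mul (by positivity)]
    rw [show l0 / l2 * (l2 / l0) = 1 by field_simp]
    exact Real.sqrt_one
  have habs : |t * s| = |t| * s := by
    rw [abs_mul, abs_of_pos hspos]
  have hts : |t| * s ≤ 1 / 2 := by
    have h1 : |t| * s ≤ M * s := mul_le_mul_of_nonneg_right ht hspos.le
    have h2 : M * s ≤ (1 / 2) * Real.sqrt (l0 / l2) * s :=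
      mul_le_mul_of_nonneg_right hcase hspos.le
    have : (1 / 2) * Real.sqrt (l0 / l2) * s = 1 / 2 := by
      rw [mul_assoc, hmul, mul_one]
    linarith
  have hB : revHuber (t * s) = |t| * s := by
    unfold revHuber
    rw [habs, if_pos (by linarith)]
  rw [hB]
  -- 2 * l0 * (|t| * s) ≤ (l0 / M) * |t|
  have h2sM : 2 * s * M ≤ 1 := by
    have h2 : M * s ≤ 1 / 2 := by
      have := mul_le_mul_of_nonneg_right hcase hspos.le
      rw [mul_assoc, hmul, mul_one] at this
      linarith
    nlinarith
  have hkey : 2 * l0 * (|t| * s) ≤ (l0 / M) * |t| := by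
    rw [div_mul_eq_mul_div, le_div_iff₀ hM]
    nlinarith [mul_nonneg (mul_nonneg hl0.le (abs_nonneg t))
      (by linarith : (0:ℝ) ≤ 1 - 2 * s * M)]
  nlinarith [sq_nonneg t, hl2.le]

theorem VB_ge_VPRinf_of_small_M
    (n p : ℕ) (X : Matrix (Fin n) (Fin p) ℝ) (y : Fin n → ℝ)
    (l0 l2 M : ℝ) (hl0 : 0 < l0) (hl2 : 0 < l2) (hM : 0 < M)
    (hcase : M ≤ (1 / 2) * Real.sqrt (l0 / l2)) :
    sInf {v : ℝ | ∃ β : Fin p → ℝ, (∀ i, |β i| ≤ M) ∧ v = Hobj n p X y l0 l2 M β} ≥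
      sInf {v : ℝ | ∃ β : Fin p → ℝ, v = Gobj n p X y l0 l2 β} := by
  have hGnonneg : ∀ β : Fin p → ℝ, 0 ≤ Gobj n p X y l0 l2 β := by
    intro β
    unfold Gobj
    have h1 : (0:ℝ) ≤ (1 / 2) * ∑ j, (y j - ∑ i, X j i * β i) ^ 2 := by positivity
    have h2 : (0:ℝ) ≤ ∑ i, 2 * l0 * revHuber (β i * Real.sqrt (l2 / l0)) := by
      apply Finset.sum_nonneg
      intro i _
      have := revHuber_nonneg (β i * Real.sqrt (l2 / l0))
      nlinarith
    linarith
  have hbdd : BddBelow {v : ℝ | ∃ β : Fin p → ℝ, v = Gobj n p X y l0 l2 β} := by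
    refine ⟨0, ?_⟩
    rintro v ⟨β, rfl⟩
    exact hGnonneg β
  have hne : {v : ℝ | ∃ β : Fin p → ℝ, (∀ i, |β i| ≤ M) ∧ v = Hobj n p X y l0 l2 M β}.Nonempty := by
    exact ⟨Hobj n p X y l0 l2 M 0, 0, fun i => by simpa using hM.le, rfl⟩
  apply le_csInf hne
  rintro v ⟨β, hβ, rfl⟩
  have hGH : Gobj n p X y l0 l2 β ≤ Hobj n p X y l0 l2 M β := by
    unfold Gobj Hobj
    gcongr with i _
    exact key_term l0 l2 M (β i) hl0 hl2 hM hcase (hβ i)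
  exact le_trans (csInf_le hbdd ⟨β, rfl⟩) hGH
end

section
/- Suppose M ≥ √(λ0/λ2) and there exists a minimizer β̂ of G over ℝᵖ with ‖β̂‖∞ ≤ M. Then V_B(M) ≤ V_PR(∞). -/
lemma key_ineq (l0 l2 M t : ℝ) (hl0 : 0 < l0) (hl2 : 0 < l2) (hM : 0 < M)
    (hcase : Real.sqrt (l0 / l2) ≤ M) (ht : |t| ≤ M) :
    (l0 / M) * |t| + l2 * t ^ 2 ≤ 2 * l0 * revHuber (t * Real.sqrt (l2 / l0)) := by
  set s := Real.sqrt (l2 / l0) with hs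
  have hspos : 0 < s := Real.sqrt_pos.2 (div_pos hl2 hl0)
  have hs2 : s ^ 2 = l2 / l0 := Real.sq_sqrt (le_of_lt (div_pos hl2 hl0))
  have hinv : Real.sqrt (l0 / l2) = 1 / s := by
    rw [hs, one_div, ← Real.sqrt_inv, inv_div]
  have hMs : 1 ≤ M * s := by
    rw [hinv] at hcase
    rw [div_le_iff₀ hspos] at hcase
    linarith
  have habs : |t * s| = |t| * s := by
    rw [abs_mul, abs_of_pos hspos]
  have ht0 : 0 ≤ |t| := abs_nonneg t
  have ht2 : t ^ 2 = |t| ^ 2 := (sq_abs t).symm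
  have hl2eq : l2 = l0 * s ^ 2 := by
    rw [hs2]; field_simp
  rw [revHuber]
  split_ifs with h
  · -- |t*s| ≤ 1
    rw [habs] at h
    have h1 : l2 * t ^ 2 ≤ l0 * s * |t| := by
      rw [hl2eq, ht2]
      nlinarith [mul_le_mul_of_nonneg_left h (mul_nonneg (mul_nonneg hl0.le hspos.le) ht0)]
    have h2 : (l0 / M) * |t| ≤ l0 * s * |t| := by
      rw [div_mul_eq_mul_div, div_le_iff₀ hM]
      nlinarith [mul_le_mul_of_nonneg_left hMs (mul_nonneg hl0.le ht0)]
    rw [habs]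
    nlinarith
  · -- |t*s| > 1
    have : 2 * l0 * (((t * s) ^ 2 + 1) / 2) = l2 * t ^ 2 + l0 := by
      rw [hl2eq]; ring
    rw [this]
    have : (l0 / M) * |t| ≤ l0 := by
      rw [div_mul_eq_mul_div, div_le_iff₀ hM]
      nlinarith
    linarith

theorem VB_le_VPRinf_of_large_M
    (n p : ℕ) (X : Matrix (Fin n) (Fin p) ℝ) (y : Fin n → ℝ)
    (l0 l2 M : ℝ) (hl0 : 0 < l0) (hl2 : 0 < l2) (hM : 0 < M)
    (hcase : Real.sqrt (l0 / l2) ≤ M)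
    (βh : Fin p → ℝ) (hβh : ∀ i, |βh i| ≤ M)
    (hmin : ∀ β : Fin p → ℝ, Gobj n p X y l0 l2 βh ≤ Gobj n p X y l0 l2 β) :
    sInf {v : ℝ | ∃ β : Fin p → ℝ, (∀ i, |β i| ≤ M) ∧ v = Hobj n p X y l0 l2 M β} ≤
      sInf {v : ℝ | ∃ β : Fin p → ℝ, v = Gobj n p X y l0 l2 β} := by
  have hHmem : Hobj n p X y l0 l2 M βh ∈
      {v : ℝ | ∃ β : Fin p → ℝ, (∀ i, |β i| ≤ M) ∧ v = Hobj n p X y l0 l2 M β} :=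
    ⟨βh, hβh, rfl⟩
  have hbdd : BddBelow {v : ℝ | ∃ β : Fin p → ℝ, (∀ i, |β i| ≤ M) ∧ v = Hobj n p X y l0 l2 M β} := by
    refine ⟨0, fun v hv => ?_⟩
    obtain ⟨β, _, rfl⟩ := hv
    unfold Hobj
    have h1 : (0:ℝ) ≤ ∑ j, (y j - ∑ i, X j i * β i) ^ 2 :=
      Finset.sum_nonneg fun j _ => sq_nonneg _
    have h2 : (0:ℝ) ≤ ∑ i, ((l0 / M) * |β i| + l2 * (β i) ^ 2) :=
      Finset.sum_nonneg fun i _ => add_nonneg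
        (mul_nonneg (le_of_lt (div_pos hl0 hM)) (abs_nonneg _))
        (mul_nonneg (le_of_lt hl2) (sq_nonneg _))
    linarith
  have step1 : sInf {v : ℝ | ∃ β : Fin p → ℝ, (∀ i, |β i| ≤ M) ∧ v = Hobj n p X y l0 l2 M β}
      ≤ Hobj n p X y l0 l2 M βh := csInf_le hbdd hHmem
  have step2 : Hobj n p X y l0 l2 M βh ≤ Gobj n p X y l0 l2 βh := by
    unfold Hobj Gobj
    have : ∑ i, ((l0 / M) * |βh i| + l2 * (βh i) ^ 2)
        ≤ ∑ i, 2 * l0 * revHuber (βh i * Real.sqrt (l2 / l0)) :=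
      Finset.sum_le_sum fun i _ => key_ineq l0 l2 M (βh i) hl0 hl2 hM hcase (hβh i)
    linarith
  have step3 : Gobj n p X y l0 l2 βh ≤
      sInf {v : ℝ | ∃ β : Fin p → ℝ, v = Gobj n p X y l0 l2 β} := by
    refine le_csInf ⟨Gobj n p X y l0 l2 βh, βh, rfl⟩ ?_
    rintro v ⟨β, rfl⟩
    exact hmin β
  linarith
end

section
/- Let λ0, λ2, M be positive reals with √(λ0/λ2) ≤ M, and let b ∈ ℝ. Define β̂ = T(b; 2√(λ0·λ2), M) if |b| ≤ 2√(λ0·λ2) + √(λ0/λ2), and β̂ = T(b/(1 + 2λ2); 0, M) otherwise. Then β̂ is a minimizer of the function β ↦ (1/2)(β − b)² + 2λ0·B(β·√(λ2/λ0)) over the set {β ∈ ℝ : |β| ≤ M}. -/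
/-- The boxed soft-thresholding operator `T(t; a, m)`. -/
noncomputable def boxST (t a m : ℝ) : ℝ :=
  if |t| ≤ a then 0
  else if |t| ≤ a + m then (|t| - a) * Real.sign t
  else m * Real.sign t

/-!
Write `r = √(λ0/λ2)`. Then `2√(λ0λ2) = 2λ2 r` and the objective is
`½(β - b)² + λ2 ((|β| - r)₊² + 2r|β|)`, which is even in `(β, b)`.
So we may take `b ≥ 0` and then `β ≥ 0`, where boxed soft-thresholding is `min (max (t - a) 0) m`.
Each candidate is then checked against every `β ∈ [0, M]` by completing the square, replacing
`(β - r)₊²` by its tangent at the candidate when the candidate lies beyond the kink `r`.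
-/

lemma boxST_neg (t a m : ℝ) : boxST (-t) a m = -boxST t a m := by
  simp only [boxST, abs_neg, Real.sign_neg]
  split_ifs <;> ring

lemma boxST_of_nonneg {t a m : ℝ} (ht : 0 ≤ t) (ha : 0 ≤ a) (hm : 0 ≤ m) :
    boxST t a m = min (max (t - a) 0) m := by
  rw [boxST, abs_of_nonneg ht]
  split_ifs with h₁ h₂
  · rw [max_eq_right (by linarith), min_eq_left hm]
  · rw [Real.sign_of_pos (by linarith), max_eq_left (by linarith), min_eq_left (by linarith),
      mul_one]
  · rw [Real.sign_of_pos (by linarith), max_eq_left (by linarith), min_eq_right (by linarith),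
      mul_one]

lemma abs_boxST_le {t a m : ℝ} (ha : 0 ≤ a) (hm : 0 ≤ m) : |boxST t a m| ≤ m := by
  rcases le_total 0 t with ht | ht
  · rw [boxST_of_nonneg ht ha hm, abs_of_nonneg (le_min (le_max_right _ _) hm)]
    exact min_le_right _ _
  · rw [← neg_neg t, boxST_neg, abs_neg, boxST_of_nonneg (neg_nonneg.2 ht) ha hm,
      abs_of_nonneg (le_min (le_max_right _ _) hm)]
    exact min_le_right _ _

lemma two_mul_sq_mul_revHuber_div {r : ℝ} (hr : 0 < r) (β : ℝ) :
    2 * r ^ 2 * revHuber (β / r) = max (|β| - r) 0 ^ 2 + 2 * r * |β| := by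
  rw [revHuber]
  split_ifs with h <;> rw [abs_div, abs_of_pos hr] at * <;> rw [div_le_one hr] at h
  · rw [max_eq_right (by linarith)]
    field_simp
    ring
  · rw [max_eq_left (by linarith), div_pow, ← sq_abs β]
    field_simp
    ring

/-- The objective of the theorem, in terms of `l = λ2` and `r = √(λ0/λ2)`. -/
noncomputable def huberObjective (l r b β : ℝ) : ℝ :=
  1 / 2 * (β - b) ^ 2 + l * (max (|β| - r) 0 ^ 2 + 2 * r * |β|)

/-- The estimator `β̂` of the theorem, in terms of `l = λ2` and `r = √(λ0/λ2)`. -/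
noncomputable def huberThreshold (l r M b : ℝ) : ℝ :=
  if |b| ≤ (1 + 2 * l) * r then boxST b (2 * l * r) M else boxST (b / (1 + 2 * l)) 0 M

lemma abs_huberThreshold_le {l r M : ℝ} (hl : 0 ≤ l) (hr : 0 ≤ r) (hM : 0 ≤ M) (b : ℝ) :
    |huberThreshold l r M b| ≤ M := by
  rw [huberThreshold]
  split_ifs <;> exact abs_boxST_le (by positivity) hM

lemma huberThreshold_neg (l r M b : ℝ) :
    huberThreshold l r M (-b) = -huberThreshold l r M b := by
  simp only [huberThreshold, abs_neg, boxST_neg, neg_div]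
  split_ifs <;> rfl

section Objective

variable {l r b : ℝ}

lemma huberObjective_neg (β : ℝ) : huberObjective l r (-b) (-β) = huberObjective l r b β := by
  simp only [huberObjective, abs_neg]
  ring

lemma huberObjective_abs_le (hb : 0 ≤ b) (β : ℝ) :
    huberObjective l r b |β| ≤ huberObjective l r b β := by
  have : b * β ≤ b * |β| := mul_le_mul_of_nonneg_left (le_abs_self β) hb
  simp only [huberObjective, abs_abs]
  nlinarith [sq_abs β]

variable (hl : 0 ≤ l)
include hl

lemma huberObjective_zero_le (hr : 0 ≤ r) (hb : b ≤ 2 * l * r) {β : ℝ} (hβ : 0 ≤ β) :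
    huberObjective l r b 0 ≤ huberObjective l r b β := by
  simp only [huberObjective, abs_zero, abs_of_nonneg hβ, zero_sub, max_eq_right (neg_nonpos.2 hr)]
  nlinarith [mul_nonneg hl (sq_nonneg (max (β - r) 0)), mul_nonneg hβ (sub_nonneg.2 hb)]

lemma huberObjective_sub_le (hb₀ : 2 * l * r ≤ b) (hb₁ : b ≤ (1 + 2 * l) * r) {β : ℝ}
    (hβ : 0 ≤ β) : huberObjective l r b (b - 2 * l * r) ≤ huberObjective l r b β := by
  simp only [huberObjective, abs_of_nonneg hβ, abs_of_nonneg (sub_nonneg.2 hb₀),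
    max_eq_right (show b - 2 * l * r - r ≤ 0 by linarith)]
  nlinarith [mul_nonneg hl (sq_nonneg (max (β - r) 0)), sq_nonneg (β - (b - 2 * l * r))]

/-- First-order optimality beyond the kink: `(1 + 2l)c - b` is the derivative at `c`. -/
lemma huberObjective_le_of_deriv {c β : ℝ} (hr : 0 ≤ r) (hrc : r ≤ c) (hβ : 0 ≤ β)
    (hderiv : 0 ≤ ((1 + 2 * l) * c - b) * (β - c)) :
    huberObjective l r b c ≤ huberObjective l r b β := by
  have tangent : (c - r) ^ 2 + 2 * (c - r) * (β - c) ≤ max (β - r) 0 ^ 2 := by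
    rcases le_total β r with h | h
    · rw [max_eq_right (by linarith)]
      nlinarith
    · rw [max_eq_left (by linarith)]
      nlinarith [sq_nonneg (β - c)]
  simp only [huberObjective, abs_of_nonneg hβ, abs_of_nonneg (hr.trans hrc),
    max_eq_left (sub_nonneg.2 hrc)]
  nlinarith [mul_le_mul_of_nonneg_left tangent hl, sq_nonneg (β - c)]

end Objective

lemma huberObjective_huberThreshold_le_of_nonneg {l r M b : ℝ} (hl : 0 ≤ l) (hr : 0 ≤ r)
    (hrM : r ≤ M) (hb : 0 ≤ b) {β : ℝ} (hβ : 0 ≤ β) (hβM : β ≤ M) :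
    huberObjective l r b (huberThreshold l r M b) ≤ huberObjective l r b β := by
  have hM : 0 ≤ M := hr.trans hrM
  have hl₁ : 0 < 1 + 2 * l := by linarith
  rw [huberThreshold, abs_of_nonneg hb]
  split_ifs with hsmall
  · rw [boxST_of_nonneg hb (by positivity) hM]
    rcases le_total b (2 * l * r) with hb₀ | hb₀
    · rw [max_eq_right (by linarith), min_eq_left hM]
      exact huberObjective_zero_le hl hr hb₀ hβ
    · rw [max_eq_left (by linarith), min_eq_left (by linarith)]
      exact huberObjective_sub_le hl hb₀ hsmall hβ
  · have hrc : r ≤ b / (1 + 2 * l) := by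
      rw [le_div_iff₀ hl₁]
      linarith
    rw [boxST_of_nonneg (div_nonneg hb hl₁.le) le_rfl hM, sub_zero,
      max_eq_left (hr.trans hrc)]
    rcases le_total (b / (1 + 2 * l)) M with hcM | hcM
    · rw [min_eq_left hcM]
      refine huberObjective_le_of_deriv hl hr hrc hβ ?_
      rw [mul_div_cancel₀ b hl₁.ne', sub_self, zero_mul]
    · rw [min_eq_right hcM]
      refine huberObjective_le_of_deriv hl hr hrM hβ
        (mul_nonneg_of_nonpos_of_nonpos ?_ (by linarith))
      rw [le_div_iff₀ hl₁] at hcM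
      linarith

lemma huberObjective_huberThreshold_le {l r M : ℝ} (hl : 0 ≤ l) (hr : 0 ≤ r) (hrM : r ≤ M)
    (b : ℝ) {β : ℝ} (hβM : |β| ≤ M) :
    huberObjective l r b (huberThreshold l r M b) ≤ huberObjective l r b β := by
  wlog hb : 0 ≤ b generalizing b β
  · have := this (-b) (β := -β) (by rwa [abs_neg]) (by linarith)
    rwa [huberThreshold_neg, huberObjective_neg, huberObjective_neg] at this
  calc huberObjective l r b (huberThreshold l r M b)
      ≤ huberObjective l r b |β| :=
        huberObjective_huberThreshold_le_of_nonneg hl hr hrM hb (abs_nonneg β) hβM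
    _ ≤ huberObjective l r b β := huberObjective_abs_le hb β

theorem thresholding_case_le_general
    (l0 l2 M b : ℝ) (hl0 : 0 < l0) (hl2 : 0 < l2)
    (hcase : Real.sqrt (l0 / l2) ≤ M)
    (βh : ℝ)
    (hβh : βh = if |b| ≤ 2 * Real.sqrt (l0 * l2) + Real.sqrt (l0 / l2)
                then boxST b (2 * Real.sqrt (l0 * l2)) M
                else boxST (b / (1 + 2 * l2)) 0 M) :
    |βh| ≤ M ∧
      ∀ β : ℝ, |β| ≤ M →
        (1 / 2) * (βh - b) ^ 2 + 2 * l0 * revHuber (βh * Real.sqrt (l2 / l0)) ≤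
          (1 / 2) * (β - b) ^ 2 + 2 * l0 * revHuber (β * Real.sqrt (l2 / l0)) := by
  set r := √(l0 / l2) with hr_def
  have hr : 0 < r := Real.sqrt_pos.2 (div_pos hl0 hl2)
  have hl0_eq : l0 = l2 * r ^ 2 := by
    rw [Real.sq_sqrt (div_pos hl0 hl2).le]
    field_simp
  have hsqrt_mul : √(l0 * l2) = l2 * r := by
    rw [hl0_eq, show l2 * r ^ 2 * l2 = (l2 * r) ^ 2 by ring, Real.sqrt_sq (by positivity)]
  have hβh' : βh = huberThreshold l2 r M b := by
    rw [hβh, huberThreshold, hsqrt_mul, show 2 * (l2 * r) + r = (1 + 2 * l2) * r by ring,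
      mul_assoc]
  have hsqrt_inv : √(l2 / l0) = r⁻¹ := by rw [hr_def, ← Real.sqrt_inv, inv_div]
  have hobjective : ∀ β, (1 / 2) * (β - b) ^ 2 + 2 * l0 * revHuber (β * √(l2 / l0)) =
      huberObjective l2 r b β := by
    intro β
    rw [huberObjective, ← two_mul_sq_mul_revHuber_div hr, hsqrt_inv, ← div_eq_mul_inv, hl0_eq]
    ring
  subst hβh'
  refine ⟨abs_huberThreshold_le hl2.le hr.le (hr.le.trans hcase) b, fun β hβ => ?_⟩
  rw [hobjective, hobjective]
  exact huberObjective_huberThreshold_le hl2.le hr.le hcase b hβ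

theorem thresholding_case_le
    (l0 l2 M b : ℝ) (hl0 : 0 < l0) (hl2 : 0 < l2) (hM : 0 < M)
    (hcase : Real.sqrt (l0 / l2) ≤ M)
    (βh : ℝ)
    (hβh : βh = if |b| ≤ 2 * Real.sqrt (l0 * l2) + Real.sqrt (l0 / l2)
                then boxST b (2 * Real.sqrt (l0 * l2)) M
                else boxST (b / (1 + 2 * l2)) 0 M) :
    |βh| ≤ M ∧
      ∀ β : ℝ, |β| ≤ M →
        (1 / 2) * (βh - b) ^ 2 + 2 * l0 * revHuber (βh * Real.sqrt (l2 / l0)) ≤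
          (1 / 2) * (β - b) ^ 2 + 2 * l0 * revHuber (β * Real.sqrt (l2 / l0)) :=
  thresholding_case_le_general l0 l2 M b hl0 hl2 hcase βh hβh
end

section
/- Let λ0, λ2, M be positive reals and b ∈ ℝ, and set c(λ0, λ2, M) = 2√(λ0·λ2) if √(λ0/λ2) ≤ M and c(λ0, λ2, M) = λ0/M + λ2·M if √(λ0/λ2) > M. Then 0 is a minimizer of the function β ↦ (1/2)(β − b)² + ψ(β; λ0, λ2, M) over the set {β ∈ ℝ : |β| ≤ M} if and only if |b| ≤ c(λ0, λ2, M). -/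
/-- The threshold `c(λ0, λ2, M)`. -/
noncomputable def cThresh (l0 l2 M : ℝ) : ℝ :=
  if Real.sqrt (l0 / l2) ≤ M then 2 * Real.sqrt (l0 * l2) else l0 / M + l2 * M

/-!
Near `0` the penalty `ψ` is exactly the `ℓ₁` penalty `c |β|`, and everywhere it dominates it (the
reverse Huber function dominates `|t|` because `(t² + 1)/2 ≥ |t|`). So `0` minimizes the objective
iff it minimizes the lasso objective `(β - b)²/2 + c |β|` on a small interval around `0`, which is
the soft-thresholding condition `|b| ≤ c`: for `β` of the sign of `b` and small modulus `ε`, the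
objective is `b²/2 - ε (|b| - c) + ε²/2`.
-/

open Real

theorem half_sq_le_half_sq_sub_add_mul_abs {b c : ℝ} (hb : |b| ≤ c) (β : ℝ) :
    1 / 2 * b ^ 2 ≤ 1 / 2 * (β - b) ^ 2 + c * |β| := by
  have hbβ : b * β ≤ c * |β| := calc
    b * β ≤ |b| * |β| := (le_abs_self _).trans (abs_mul b β).le
    _ ≤ c * |β| := by gcongr
  nlinarith [sq_nonneg β]

theorem abs_le_of_forall_half_sq_le {b c δ : ℝ} (hδ : 0 < δ)
    (h : ∀ β, |β| ≤ δ → 1 / 2 * b ^ 2 ≤ 1 / 2 * (β - b) ^ 2 + c * |β|) : |b| ≤ c := by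
  refine le_of_forall_pos_le_add fun ε hε => ?_
  set η := min (2 * ε) δ
  have hη : 0 < η := lt_min (by positivity) hδ
  obtain ⟨β, hβ, hbβ⟩ : ∃ β, |β| = η ∧ b * β = |b| * η := by
    rcases le_or_gt 0 b with hb | hb
    · exact ⟨η, abs_of_pos hη, by rw [abs_of_nonneg hb]⟩
    · exact ⟨-η, by rw [abs_neg, abs_of_pos hη], by rw [abs_of_neg hb]; ring⟩
  have hmin := h β (hβ ▸ min_le_right _ _)
  rw [hβ] at hmin
  have hβsq : β ^ 2 = η ^ 2 := by rw [← sq_abs, hβ]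
  have : |b| ≤ c + η / 2 := by nlinarith
  linarith [min_le_left (2 * ε) δ]

theorem forall_half_sq_sub_add_le_iff {f : ℝ → ℝ} {b c δ M : ℝ} (hδ : 0 < δ) (hM : 0 < M)
    (hle : ∀ β, |β| ≤ M → c * |β| ≤ f β) (heq : ∀ β, |β| ≤ δ → f β = c * |β|) :
    (∀ β, |β| ≤ M → 1 / 2 * (0 - b) ^ 2 + f 0 ≤ 1 / 2 * (β - b) ^ 2 + f β) ↔ |b| ≤ c := by
  have hf0 : f 0 = 0 := by simpa using heq 0 (by simpa using hδ.le)
  simp only [hf0, zero_sub, neg_sq, add_zero]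
  constructor
  · intro h
    refine abs_le_of_forall_half_sq_le (lt_min hδ hM) fun β hβ => ?_
    rw [← heq β (hβ.trans (min_le_left _ _))]
    exact h β (hβ.trans (min_le_right _ _))
  · intro hb β hβ
    linarith [half_sq_le_half_sq_sub_add_mul_abs hb β, hle β hβ]

theorem abs_le_revHuber (t : ℝ) : |t| ≤ revHuber t := by
  unfold revHuber
  split_ifs
  · exact le_rfl
  · nlinarith [sq_abs t, sq_nonneg (|t| - 1)]

theorem revHuber_of_abs_le_one {t : ℝ} (ht : |t| ≤ 1) : revHuber t = |t| := if_pos ht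

theorem mul_sqrt_div_eq_sqrt_mul {a : ℝ} (ha : 0 < a) (b : ℝ) : a * √(b / a) = √(a * b) := by
  rw [show a * b = a ^ 2 * (b / a) by field_simp, sqrt_mul (by positivity), sqrt_sq ha.le]

theorem sqrt_div_mul_sqrt_div {a b : ℝ} (ha : 0 < a) (hb : 0 < b) : √(a / b) * √(b / a) = 1 := by
  rw [← sqrt_mul (div_pos ha hb).le, div_mul_div_comm, mul_comm b, div_self (by positivity),
    sqrt_one]

theorem cThresh_mul_abs_le_psi {l0 : ℝ} (hl0 : 0 < l0) (l2 M β : ℝ) :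
    cThresh l0 l2 M * |β| ≤ psi l0 l2 M β := by
  unfold cThresh psi
  split_ifs
  · calc 2 * √(l0 * l2) * |β| = 2 * l0 * |β * √(l2 / l0)| := by
          rw [abs_mul, abs_of_nonneg (sqrt_nonneg _), ← mul_sqrt_div_eq_sqrt_mul hl0]; ring
      _ ≤ 2 * l0 * revHuber (β * √(l2 / l0)) := by gcongr; exact abs_le_revHuber _
  · exact le_rfl

theorem psi_eq_cThresh_mul_abs {l0 l2 : ℝ} (hl0 : 0 < l0) (hl2 : 0 < l2) (M : ℝ) {β : ℝ}
    (hβ : |β| ≤ √(l0 / l2)) : psi l0 l2 M β = cThresh l0 l2 M * |β| := by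
  unfold cThresh psi
  split_ifs
  · have hβr : |β * √(l2 / l0)| = |β| * √(l2 / l0) := by
      rw [abs_mul, abs_of_nonneg (sqrt_nonneg _)]
    have hβr_le : |β * √(l2 / l0)| ≤ 1 := by
      rw [hβr, ← sqrt_div_mul_sqrt_div hl0 hl2]
      gcongr
    rw [revHuber_of_abs_le_one hβr_le, hβr, ← mul_sqrt_div_eq_sqrt_mul hl0]
    ring
  · rfl

theorem zero_is_minimizer_iff
    (l0 l2 M b : ℝ) (hl0 : 0 < l0) (hl2 : 0 < l2) (hM : 0 < M) :
    (∀ β : ℝ, |β| ≤ M →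
        (1 / 2) * ((0 : ℝ) - b) ^ 2 + psi l0 l2 M 0 ≤
          (1 / 2) * (β - b) ^ 2 + psi l0 l2 M β) ↔
      |b| ≤ cThresh l0 l2 M :=
  forall_half_sq_sub_add_le_iff (sqrt_pos.mpr (div_pos hl0 hl2)) hM
    (fun β _ => cThresh_mul_abs_le_psi hl0 l2 M β) (fun _ => psi_eq_cThresh_mul_abs hl0 hl2 M)
end

section
/- Suppose √(λ0/λ2) ≤ M and let β* be a minimizer of F over {β ∈ ℝᵖ : ‖β‖∞ ≤ M}. Set r* = y − Xβ*, α* = −r*, and γ*_i = (α*ᵀX_i − 2M·λ2·sign(α*ᵀX_i)) if |β*_i| = M and γ*_i = 0 otherwise. Then h1(α, γ) ≤ h1(α*, γ*) for all α ∈ ℝⁿ and γ ∈ ℝᵖ, and h1(α*, γ*) = F(β*). -/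
/-- `v(α, γᵢ) = [ (αᵀXᵢ − γᵢ)²/(4λ2) − λ0 ]₊ + M |γᵢ|` for column `i` of `X`. -/
noncomputable def vdual (n p : ℕ) (X : Matrix (Fin n) (Fin p) ℝ)
    (l0 l2 M : ℝ) (α : Fin n → ℝ) (i : Fin p) (g : ℝ) : ℝ :=
  max (((∑ j, α j * X j i) - g) ^ 2 / (4 * l2) - l0) 0 + M * |g|

/-- The dual objective `h1(α, γ)`. -/
noncomputable def h1 (n p : ℕ) (X : Matrix (Fin n) (Fin p) ℝ) (y : Fin n → ℝ)
    (l0 l2 M : ℝ) (α : Fin n → ℝ) (γ : Fin p → ℝ) : ℝ :=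
  -(1 / 2) * ∑ j, (α j) ^ 2 - ∑ j, α j * y j - ∑ i, vdual n p X l0 l2 M α i (γ i)

/-!
For every `β`, `α`, `γ`, the gap `F β - h1 α γ` splits as `½‖y - Xβ + α‖²` plus, for each
coordinate, `ψ βᵢ + aᵢ βᵢ + ψ*(aᵢ - γᵢ) + M |γᵢ|` with `a = αᵀX` and `ψ*` the conjugate of `ψ`.
When `|βᵢ| ≤ M` each coordinate term is nonnegative by Fenchel–Young, which is weak duality.
At the minimizer the square vanishes for `α*`, and since `ψ` is convex, minimality of `F` in
the direction of one coordinate (where `F` differs from `ψ + aᵢ ·` by a square) makes `βᵢ*`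
a minimizer of `ψ + aᵢ ·` on `[-M, M]`. In the interior this is a global minimum, so
Fenchel–Young is tight with `γᵢ = 0`; on the boundary it forces `aᵢ βᵢ* ≤ -2 λ2 M²`, which
makes the prescribed `γᵢ*` tight.
-/

open Set Filter Topology Real Matrix

theorem nonpos_of_forall_le_mul {x K θ₀ : ℝ} (hθ₀ : 0 < θ₀) (h : ∀ θ ∈ Ioc 0 θ₀, x ≤ K * θ) :
    x ≤ 0 := by
  have hlim : Tendsto (fun θ => K * θ) (𝓝[>] 0) (𝓝 0) := by
    simpa using ((continuous_const_mul K).tendsto 0).mono_left nhdsWithin_le_nhds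
  exact ge_of_tendsto hlim (eventually_of_mem (Ioc_mem_nhdsGT hθ₀) h)

theorem isMinOn_of_convexOn_of_le_add {E : Type*} [AddCommGroup E] [Module ℝ E] {s : Set E}
    {f Q : E → ℝ} {b : E} (hf : ConvexOn ℝ s f) (hQ : ∀ (θ : ℝ) v, Q (θ • v) = θ ^ 2 * Q v)
    (hb : b ∈ s) (h : ∀ x ∈ s, f b ≤ f x + Q (x - b)) : IsMinOn f s b := by
  intro x hx
  suffices f b - f x ≤ 0 from sub_nonpos.1 this
  refine nonpos_of_forall_le_mul (K := Q (x - b)) one_pos fun θ ⟨hθ0, hθ1⟩ => ?_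
  have hconv : f ((1 - θ) • b + θ • x) ≤ (1 - θ) * f b + θ * f x :=
    hf.2 hb hx (sub_nonneg.2 hθ1) hθ0.le (by ring)
  have hopt := h _ (hf.1 hb hx (sub_nonneg.2 hθ1) hθ0.le (by ring))
  rw [show (1 - θ) • b + θ • x - b = θ • (x - b) by module, hQ] at hopt
  nlinarith

theorem convexOn_univ_of_forall_exists_le_add_mul {f : ℝ → ℝ}
    (h : ∀ x, ∃ c, ∀ z, f x + c * (z - x) ≤ f z) : ConvexOn ℝ univ f := by
  refine ⟨convex_univ, fun x _ y _ a b ha hb hab => ?_⟩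
  simp only [smul_eq_mul]
  obtain ⟨c, hc⟩ := h (a * x + b * y)
  have hcomb : a * (f (a * x + b * y) + c * (x - (a * x + b * y)))
      + b * (f (a * x + b * y) + c * (y - (a * x + b * y))) = f (a * x + b * y) := by
    linear_combination (f (a * x + b * y) - c * (a * x + b * y)) * hab
  linarith [mul_le_mul_of_nonneg_left (hc x) ha, mul_le_mul_of_nonneg_left (hc y) hb]

theorem Real.sign_mul_abs_self (r : ℝ) : sign r * |r| = r := by
  rcases lt_trichotomy r 0 with h | rfl | h
  · rw [sign_of_neg h, abs_of_neg h]; ring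
  · simp
  · rw [sign_of_pos h, abs_of_pos h]; ring

theorem Real.abs_sign_of_ne_zero {r : ℝ} (hr : r ≠ 0) : |sign r| = 1 := by
  rcases sign_apply_eq_of_ne_zero r hr with h | h <;> simp [h]

theorem Finset.sum_apply_update {ι α M : Type*} [Fintype ι] [DecidableEq ι] [AddCommGroup M]
    (h : ι → α → M) (β : ι → α) (i : ι) (x : α) :
    ∑ k, h k (Function.update β i x k) = ∑ k, h k (β k) + (h i x - h i (β i)) := by
  rw [Finset.sum_congr rfl fun k _ => Function.apply_update h β i x k,
    Finset.sum_update_of_mem (Finset.mem_univ i), ← Finset.add_sum_erase _ _ (Finset.mem_univ i),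
    Finset.sdiff_singleton_eq_erase]
  abel

/-- When `√(λ0/λ2) ≤ M`, `conjPsi c = sup_b (-c b - ψ b)` is the convex conjugate of `ψ` at `-c`. -/
noncomputable def conjPsi (l0 l2 c : ℝ) : ℝ := max (c ^ 2 / (4 * l2) - l0) 0

section Scalar

variable {l0 l2 M : ℝ}

theorem sqrt_div_pos (hl0 : 0 < l0) (hl2 : 0 < l2) : 0 < √(l0 / l2) :=
  sqrt_pos.2 (div_pos hl0 hl2)

theorem mul_sqrt_div_sq (hl0 : 0 < l0) (hl2 : 0 < l2) : l2 * √(l0 / l2) ^ 2 = l0 := by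
  rw [sq_sqrt (div_pos hl0 hl2).le]; field_simp

theorem sqrt_div_swap (l0 l2 : ℝ) : √(l2 / l0) = (√(l0 / l2))⁻¹ := by
  rw [← inv_div, sqrt_inv]

theorem psi_of_abs_le (hl0 : 0 < l0) (hl2 : 0 < l2) (hcase : √(l0 / l2) ≤ M) {b : ℝ}
    (hb : |b| ≤ √(l0 / l2)) : psi l0 l2 M b = 2 * l2 * √(l0 / l2) * |b| := by
  have ht := sqrt_div_pos hl0 hl2
  have hl0t := mul_sqrt_div_sq hl0 hl2
  have hb' : |b * √(l2 / l0)| ≤ 1 := by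
    rw [sqrt_div_swap, abs_mul, abs_inv, abs_of_pos ht, ← div_eq_mul_inv]
    exact div_le_one_of_le₀ hb ht.le
  rw [psi, if_pos hcase, revHuber, if_pos hb', sqrt_div_swap, abs_mul, abs_inv, abs_of_pos ht]
  field_simp
  linear_combination (-|b|) * hl0t

theorem psi_of_le_abs (hl0 : 0 < l0) (hl2 : 0 < l2) (hcase : √(l0 / l2) ≤ M) {b : ℝ}
    (hb : √(l0 / l2) ≤ |b|) : psi l0 l2 M b = l2 * b ^ 2 + l0 := by
  have ht := sqrt_div_pos hl0 hl2
  have hl0t := mul_sqrt_div_sq hl0 hl2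
  rw [psi, if_pos hcase, revHuber, sqrt_div_swap]
  split_ifs with hb'
  · have hbt : |b| = √(l0 / l2) := by
      refine le_antisymm ?_ hb
      rwa [abs_mul, abs_inv, abs_of_pos ht, ← div_eq_mul_inv, div_le_one ht] at hb'
    rw [abs_mul, abs_inv, abs_of_pos ht, hbt, ← sq_abs b, hbt]
    field_simp
    linear_combination -hl0t
  · field_simp
    linear_combination (-b ^ 2) * hl0t

theorem psi_add_mul_add_conjPsi_nonneg (hl0 : 0 < l0) (hl2 : 0 < l2) (hcase : √(l0 / l2) ≤ M)
    (b c : ℝ) : 0 ≤ psi l0 l2 M b + c * b + conjPsi l0 l2 c := by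
  have hl0t := mul_sqrt_div_sq hl0 hl2
  have hmax : c ^ 2 / (4 * l2) - l0 ≤ conjPsi l0 l2 c := le_max_left _ _
  have hnonneg : 0 ≤ conjPsi l0 l2 c := le_max_right _ _
  have hdiv : 4 * l2 * (c ^ 2 / (4 * l2)) = c ^ 2 := by field_simp
  have hcb : -(c * b) ≤ |c| * |b| := abs_mul c b ▸ neg_le_abs _
  rcases le_total |b| √(l0 / l2) with hb | hb
  · rw [psi_of_abs_le hl0 hl2 hcase hb]
    rcases le_total |c| (2 * l2 * √(l0 / l2)) with hc | hc
    · nlinarith [mul_le_mul_of_nonneg_right hc (abs_nonneg b)]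
    · have hb4 : 4 * l2 * |b| ≤ 4 * l2 * √(l0 / l2) := by gcongr
      have hfac : 0 ≤ |c| + 2 * l2 * √(l0 / l2) - 4 * l2 * |b| := by linarith
      nlinarith [mul_nonneg (sub_nonneg.2 hc) hfac, sq_abs c]
  · rw [psi_of_le_abs hl0 hl2 hcase hb]
    nlinarith [sq_nonneg (2 * l2 * b + c)]

theorem conjPsi_eq_zero {c : ℝ} (hc : c ^ 2 / (4 * l2) ≤ l0) :
    conjPsi l0 l2 c = 0 :=
  max_eq_right (sub_nonpos.2 hc)

theorem exists_point_psi_add_mul_add_conjPsi_nonpos (hl0 : 0 < l0) (hl2 : 0 < l2)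
    (hcase : √(l0 / l2) ≤ M) (c : ℝ) : ∃ b, psi l0 l2 M b + c * b + conjPsi l0 l2 c ≤ 0 := by
  have ht := sqrt_div_pos hl0 hl2
  have hl0t := mul_sqrt_div_sq hl0 hl2
  by_cases hc : c ^ 2 / (4 * l2) ≤ l0
  · refine ⟨0, ?_⟩
    rw [psi_of_abs_le hl0 hl2 hcase (by simp [ht.le]), conjPsi_eq_zero hc]
    simp
  · have hb : √(l0 / l2) ≤ |-c / (2 * l2)| := by
      refine abs_of_pos ht ▸ sq_le_sq.1 ?_
      rw [not_le, ← hl0t] at hc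
      rw [div_pow]
      field_simp at hc ⊢
      nlinarith
    refine ⟨-c / (2 * l2), ?_⟩
    rw [psi_of_le_abs hl0 hl2 hcase hb, conjPsi, max_eq_left (by linarith)]
    exact le_of_eq (by field_simp; ring)

theorem exists_slope_psi_add_mul_add_conjPsi_nonpos (hl0 : 0 < l0) (hl2 : 0 < l2)
    (hcase : √(l0 / l2) ≤ M) (b : ℝ) : ∃ c, psi l0 l2 M b + c * b + conjPsi l0 l2 c ≤ 0 := by
  have hl0t := mul_sqrt_div_sq hl0 hl2
  have hslope : (2 * l2 * √(l0 / l2)) ^ 2 / (4 * l2) ≤ l0 := le_of_eq (by field_simp; linarith)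
  rcases le_total |b| √(l0 / l2) with hb | hb
  · rw [psi_of_abs_le hl0 hl2 hcase hb]
    rcases le_total 0 b with hb0 | hb0
    · refine ⟨-(2 * l2 * √(l0 / l2)), ?_⟩
      rw [conjPsi_eq_zero (by rwa [neg_sq]), abs_of_nonneg hb0]
      linarith
    · refine ⟨2 * l2 * √(l0 / l2), ?_⟩
      rw [conjPsi_eq_zero hslope, abs_of_nonpos hb0]
      linarith
  · refine ⟨-(2 * l2 * b), ?_⟩
    have hsq : l0 ≤ l2 * b ^ 2 := by
      rw [← hl0t, ← sq_abs b]; gcongr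
    rw [psi_of_le_abs hl0 hl2 hcase hb, conjPsi, max_eq_left (by field_simp; linarith)]
    exact le_of_eq (by field_simp; ring)

theorem convexOn_psi_add_mul (hl0 : 0 < l0) (hl2 : 0 < l2) (hcase : √(l0 / l2) ≤ M) (a : ℝ) :
    ConvexOn ℝ univ fun x => psi l0 l2 M x + a * x := by
  refine convexOn_univ_of_forall_exists_le_add_mul fun x => ?_
  obtain ⟨c, hc⟩ := exists_slope_psi_add_mul_add_conjPsi_nonpos hl0 hl2 hcase x
  refine ⟨a - c, fun z => ?_⟩
  have := psi_add_mul_add_conjPsi_nonneg hl0 hl2 hcase z c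
  linarith

theorem psi_le_mul_sq_add (hl0 : 0 < l0) (hl2 : 0 < l2) (hcase : √(l0 / l2) ≤ M) (x : ℝ) :
    psi l0 l2 M x ≤ l2 * x ^ 2 + l0 := by
  rcases le_total |x| √(l0 / l2) with hx | hx
  · rw [psi_of_abs_le hl0 hl2 hcase hx]
    nlinarith [mul_nonneg hl2.le (sq_nonneg (|x| - √(l0 / l2))), sq_abs x,
      mul_sqrt_div_sq hl0 hl2]
  · exact (psi_of_le_abs hl0 hl2 hcase hx).le

theorem mul_le_of_isMinOn_of_abs_eq (hl0 : 0 < l0) (hl2 : 0 < l2) (hcase : √(l0 / l2) ≤ M)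
    {a b : ℝ} (hmin : IsMinOn (fun x => psi l0 l2 M x + a * x) (Icc (-M) M) b) (hb : |b| = M) :
    a * b ≤ -(2 * l2 * M ^ 2) := by
  have hψb : psi l0 l2 M b = l2 * M ^ 2 + l0 := by
    rw [psi_of_le_abs hl0 hl2 hcase (hb ▸ hcase), ← sq_abs, hb]
  suffices a * b + 2 * l2 * M ^ 2 ≤ 0 by linarith
  refine nonpos_of_forall_le_mul (K := l2 * M ^ 2) one_pos fun θ ⟨hθ0, hθ1⟩ => ?_
  have hmem : (1 - θ) * b ∈ Icc (-M) M := by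
    rw [mem_Icc, ← abs_le, abs_mul, abs_of_nonneg (sub_nonneg.2 hθ1), hb]
    nlinarith [(abs_nonneg b).trans_eq hb]
  have hopt : psi l0 l2 M b + a * b ≤ psi l0 l2 M ((1 - θ) * b) + a * ((1 - θ) * b) := hmin hmem
  have hup := psi_le_mul_sq_add hl0 hl2 hcase ((1 - θ) * b)
  rw [mul_pow, ← sq_abs b, hb] at hup
  nlinarith

theorem psi_add_mul_add_conjPsi_sub_add_nonneg (hl0 : 0 < l0) (hl2 : 0 < l2)
    (hcase : √(l0 / l2) ≤ M) {b : ℝ} (hb : |b| ≤ M) (a g : ℝ) :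
    0 ≤ psi l0 l2 M b + a * b + (conjPsi l0 l2 (a - g) + M * |g|) := by
  have hfy := psi_add_mul_add_conjPsi_nonneg hl0 hl2 hcase b (a - g)
  have hgb : -(g * b) ≤ |g| * M :=
    (abs_mul g b ▸ neg_le_abs (g * b)).trans (mul_le_mul_of_nonneg_left hb (abs_nonneg g))
  linarith

theorem psi_add_mul_add_conjPsi_sub_add_nonpos (hl0 : 0 < l0) (hl2 : 0 < l2)
    (hcase : √(l0 / l2) ≤ M) {a b : ℝ} (hb : b ∈ Icc (-M) M)
    (hmin : IsMinOn (fun x => psi l0 l2 M x + a * x) (Icc (-M) M) b) :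
    let g := if |b| = M then a - 2 * M * l2 * sign a else 0
    psi l0 l2 M b + a * b + (conjPsi l0 l2 (a - g) + M * |g|) ≤ 0 := by
  intro g
  have hM : 0 < M := (sqrt_div_pos hl0 hl2).trans_le hcase
  by_cases hbM : |b| = M
  · have hab := mul_le_of_isMinOn_of_abs_eq hl0 hl2 hcase hmin hbM
    have hψb : psi l0 l2 M b = l2 * M ^ 2 + l0 := by
      rw [psi_of_le_abs hl0 hl2 hcase (hbM ▸ hcase), ← sq_abs, hbM]
    have ha : a ≠ 0 := by
      rintro rfl
      nlinarith [mul_pos hl2 (pow_pos hM 2)]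
    have habM : a * b = -(M * |a|) := by
      rw [← hbM, ← abs_mul, abs_of_nonpos (by nlinarith)]; ring
    have ha2 : 2 * l2 * M ≤ |a| := le_of_mul_le_mul_left (by nlinarith) hM
    have hg : g = sign a * (|a| - 2 * M * l2) := by
      simp only [g, if_pos hbM]; linear_combination -(sign_mul_abs_self a)
    have hag : a - g = 2 * M * l2 * sign a := by
      rw [hg]; linear_combination -(sign_mul_abs_self a)
    have hsign := abs_sign_of_ne_zero ha
    have hl0M : l0 ≤ l2 * M ^ 2 := by
      rw [← mul_sqrt_div_sq hl0 hl2]; gcongr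
    have hconj : conjPsi l0 l2 (a - g) = l2 * M ^ 2 - l0 := by
      have hsq : (a - g) ^ 2 / (4 * l2) = l2 * M ^ 2 := by
        rw [hag, mul_pow, ← sq_abs (sign a), hsign]; field_simp; ring
      rw [conjPsi, hsq, max_eq_left (by linarith)]
    rw [hψb, hconj, hg, abs_mul, hsign, abs_of_nonneg (by linarith)]
    linarith
  · have hlocal : IsLocalMin (fun x => psi l0 l2 M x + a * x) b := by
      refine hmin.isLocalMin (Icc_mem_nhds (lt_of_le_of_ne hb.1 ?_) (lt_of_le_of_ne hb.2 ?_))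
      · rintro rfl; exact hbM (by rw [abs_neg, abs_of_pos hM])
      · rintro rfl; exact hbM (abs_of_pos hM)
    have hglobal :=
      IsMinOn.of_isLocalMin_of_convex_univ hlocal (convexOn_psi_add_mul hl0 hl2 hcase a)
    obtain ⟨b₀, hb₀⟩ := exists_point_psi_add_mul_add_conjPsi_nonpos hl0 hl2 hcase a
    have hg : g = 0 := if_neg hbM
    rw [hg, sub_zero, abs_zero, mul_zero, add_zero]
    linarith [hglobal b₀]

end Scalar

section Primal

variable {n p : ℕ} (X : Matrix (Fin n) (Fin p) ℝ) (y : Fin n → ℝ) {l0 l2 M : ℝ}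

theorem vdual_eq (α : Fin n → ℝ) (i : Fin p) (g : ℝ) :
    vdual n p X l0 l2 M α i g = conjPsi l0 l2 ((α ᵥ* X) i - g) + M * |g| :=
  rfl

theorem Fobj_sub_h1 (β : Fin p → ℝ) (α : Fin n → ℝ) (γ : Fin p → ℝ) :
    Fobj n p X y l0 l2 M β - h1 n p X y l0 l2 M α γ =
      (1 / 2) * ∑ j, (y j - (X *ᵥ β) j + α j) ^ 2 +
        ∑ i, (psi l0 l2 M (β i) + (α ᵥ* X) i * β i + vdual n p X l0 l2 M α i (γ i)) := by
  have hdot : ∑ j, α j * (X *ᵥ β) j = ∑ i, (α ᵥ* X) i * β i := dotProduct_mulVec α X β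
  have hsq : ∑ j, (y j - (X *ᵥ β) j + α j) ^ 2 = ∑ j, (y j - (X *ᵥ β) j) ^ 2
      + 2 * ∑ j, α j * y j - 2 * ∑ j, α j * (X *ᵥ β) j + ∑ j, α j ^ 2 := by
    simp only [Finset.mul_sum, ← Finset.sum_add_distrib, ← Finset.sum_sub_distrib]
    exact Finset.sum_congr rfl fun j _ => by ring
  simp only [Fobj, h1, Finset.sum_add_distrib]
  change (1 / 2) * ∑ j, (y j - (X *ᵥ β) j) ^ 2 + _ - _ = _
  linarith

theorem Fobj_sub_h1_residual (β : Fin p → ℝ) (γ : Fin p → ℝ) :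
    Fobj n p X y l0 l2 M β - h1 n p X y l0 l2 M (X *ᵥ β - y) γ =
      ∑ i, (psi l0 l2 M (β i) + ((X *ᵥ β - y) ᵥ* X) i * β i
        + vdual n p X l0 l2 M (X *ᵥ β - y) i (γ i)) := by
  simp [Fobj_sub_h1]

theorem Fobj_update (β : Fin p → ℝ) (i : Fin p) (x : ℝ) :
    Fobj n p X y l0 l2 M (Function.update β i x) = Fobj n p X y l0 l2 M β
      + (psi l0 l2 M x + ((X *ᵥ β - y) ᵥ* X) i * x
        - (psi l0 l2 M (β i) + ((X *ᵥ β - y) ᵥ* X) i * β i))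
      + (∑ j, X j i ^ 2) / 2 * (x - β i) ^ 2 := by
  have h₀ := Fobj_sub_h1_residual (l0 := l0) (l2 := l2) (M := M) X y β 0
  set α := X *ᵥ β - y
  have h₁ := Fobj_sub_h1 (l0 := l0) (l2 := l2) (M := M) X y (Function.update β i x) α 0
  have hres : ∀ j, y j - (X *ᵥ Function.update β i x) j + α j = -(X j i * (x - β i)) := by
    intro j
    have := Finset.sum_apply_update (fun k z => X j k * z) β i x
    simp only [mulVec, dotProduct, α, Pi.sub_apply] at this ⊢
    rw [this]
    ring
  have hcoord := Finset.sum_apply_update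
    (fun k z => psi l0 l2 M z + (α ᵥ* X) k * z + vdual n p X l0 l2 M α k 0) β i x
  simp only [hres, Pi.zero_apply, neg_sq, mul_pow, ← Finset.sum_mul] at h₀ h₁ hcoord
  rw [hcoord] at h₁
  linarith

theorem isMinOn_psi_add_mul_of_isMinOn_Fobj (hl0 : 0 < l0) (hl2 : 0 < l2)
    (hcase : √(l0 / l2) ≤ M) {β : Fin p → ℝ} (hβ : ∀ i, |β i| ≤ M)
    (hmin : ∀ β' : Fin p → ℝ, (∀ i, |β' i| ≤ M) →
      Fobj n p X y l0 l2 M β ≤ Fobj n p X y l0 l2 M β') (i : Fin p) :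
    IsMinOn (fun x => psi l0 l2 M x + ((X *ᵥ β - y) ᵥ* X) i * x) (Icc (-M) M) (β i) := by
  refine isMinOn_of_convexOn_of_le_add (Q := fun d => (∑ j, X j i ^ 2) / 2 * d ^ 2)
    ((convexOn_psi_add_mul hl0 hl2 hcase _).subset (subset_univ _) (convex_Icc _ _))
    (fun θ d => by ring) (abs_le.1 (hβ i)) fun x hx => ?_
  have hfeas : ∀ k, |Function.update β i x k| ≤ M :=
    (Function.forall_update_iff β fun _ z => |z| ≤ M).2 ⟨abs_le.2 hx, fun k _ => hβ k⟩
  have := hmin _ hfeas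
  rw [Fobj_update] at this
  linarith

theorem h1_le_Fobj (hl0 : 0 < l0) (hl2 : 0 < l2) (hcase : √(l0 / l2) ≤ M) {β : Fin p → ℝ}
    (hβ : ∀ i, |β i| ≤ M) (α : Fin n → ℝ) (γ : Fin p → ℝ) :
    h1 n p X y l0 l2 M α γ ≤ Fobj n p X y l0 l2 M β := by
  have hgap := Fobj_sub_h1 (l0 := l0) (l2 := l2) (M := M) X y β α γ
  have hcoord : 0 ≤ ∑ i, (psi l0 l2 M (β i) + (α ᵥ* X) i * β i + vdual n p X l0 l2 M α i (γ i)) :=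
    Finset.sum_nonneg fun i _ =>
      psi_add_mul_add_conjPsi_sub_add_nonneg hl0 hl2 hcase (hβ i) _ _
  have hsq : 0 ≤ (1 / 2 : ℝ) * ∑ j, (y j - (X *ᵥ β) j + α j) ^ 2 := by positivity
  linarith

end Primal

theorem dual_optimal_case_le_general
    (n p : ℕ) (X : Matrix (Fin n) (Fin p) ℝ) (y : Fin n → ℝ)
    (l0 l2 M : ℝ) (hl0 : 0 < l0) (hl2 : 0 < l2)
    (hcase : Real.sqrt (l0 / l2) ≤ M)
    (βs : Fin p → ℝ) (hβs : ∀ i, |βs i| ≤ M)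
    (hmin : ∀ β : Fin p → ℝ, (∀ i, |β i| ≤ M) → Fobj n p X y l0 l2 M βs ≤ Fobj n p X y l0 l2 M β)
    (αs : Fin n → ℝ) (hαs : αs = fun j => -(y j - ∑ i, X j i * βs i))
    (γs : Fin p → ℝ)
    (hγs : ∀ i, γs i =
      if |βs i| = M
      then (∑ j, αs j * X j i) - 2 * M * l2 * Real.sign (∑ j, αs j * X j i)
      else 0) :
    (∀ (α : Fin n → ℝ) (γ : Fin p → ℝ), h1 n p X y l0 l2 M α γ ≤ h1 n p X y l0 l2 M αs γs) ∧
      h1 n p X y l0 l2 M αs γs = Fobj n p X y l0 l2 M βs := by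
  replace hαs : αs = X *ᵥ βs - y := hαs.trans (funext fun j => neg_sub _ _)
  subst hαs
  have hcoord : ∀ i, psi l0 l2 M (βs i) + ((X *ᵥ βs - y) ᵥ* X) i * βs i
      + vdual n p X l0 l2 M (X *ᵥ βs - y) i (γs i) ≤ 0 := fun i => by
    rw [vdual_eq, hγs i]
    exact psi_add_mul_add_conjPsi_sub_add_nonpos hl0 hl2 hcase (abs_le.1 (hβs i))
      (isMinOn_psi_add_mul_of_isMinOn_Fobj X y hl0 hl2 hcase hβs hmin i)
  have hgap := Fobj_sub_h1_residual (l0 := l0) (l2 := l2) (M := M) X y βs γs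
  have hstrong : h1 n p X y l0 l2 M (X *ᵥ βs - y) γs = Fobj n p X y l0 l2 M βs :=
    le_antisymm (h1_le_Fobj X y hl0 hl2 hcase hβs _ _)
      (by linarith [Finset.sum_nonpos fun i (_ : i ∈ Finset.univ) => hcoord i])
  exact ⟨fun α γ => hstrong ▸ h1_le_Fobj X y hl0 hl2 hcase hβs α γ, hstrong⟩

theorem dual_optimal_case_le
    (n p : ℕ) (X : Matrix (Fin n) (Fin p) ℝ) (y : Fin n → ℝ)
    (l0 l2 M : ℝ) (hl0 : 0 < l0) (hl2 : 0 < l2) (hM : 0 < M)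
    (hcase : Real.sqrt (l0 / l2) ≤ M)
    (βs : Fin p → ℝ) (hβs : ∀ i, |βs i| ≤ M)
    (hmin : ∀ β : Fin p → ℝ, (∀ i, |β i| ≤ M) → Fobj n p X y l0 l2 M βs ≤ Fobj n p X y l0 l2 M β)
    (αs : Fin n → ℝ) (hαs : αs = fun j => -(y j - ∑ i, X j i * βs i))
    (γs : Fin p → ℝ)
    (hγs : ∀ i, γs i =
      if |βs i| = M
      then (∑ j, αs j * X j i) - 2 * M * l2 * Real.sign (∑ j, αs j * X j i)
      else 0) :
    (∀ (α : Fin n → ℝ) (γ : Fin p → ℝ), h1 n p X y l0 l2 M α γ ≤ h1 n p X y l0 l2 M αs γs) ∧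
      h1 n p X y l0 l2 M αs γs = Fobj n p X y l0 l2 M βs :=
  dual_optimal_case_le_general n p X y l0 l2 M hl0 hl2 hcase βs hβs hmin αs hαs γs hγs
end

section
/- Suppose √(λ0/λ2) > M and let β* be a minimizer of F over {β ∈ ℝᵖ : ‖β‖∞ ≤ M}. Set r* = y − Xβ*, ρ* = −r*, and μ*_i = (|ρ*ᵀX_i| − λ0/M − λ2·M) if |β*_i| = M and μ*_i = 0 otherwise. Then (ρ*, μ*) is dual-feasible with μ*_i ≥ 0 for all i, h2(ρ, μ) ≤ h2(ρ*, μ*) for all dual-feasible pairs (ρ, μ), and h2(ρ*, μ*) = F(β*). -/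
/-- The dual objective `h2(ρ, μ) = −(1/2)‖ρ‖² − ρᵀy − M‖μ‖₁`. -/
noncomputable def h2 (n p : ℕ) (y : Fin n → ℝ) (M : ℝ)
    (ρ : Fin n → ℝ) (μ : Fin p → ℝ) : ℝ :=
  -(1 / 2) * ∑ j, (ρ j) ^ 2 - ∑ j, ρ j * y j - M * ∑ i, |μ i|

/-- Dual feasibility: `|ρᵀXᵢ| − μᵢ ≤ λ0/M + λ2 M` for all `i`. -/
def dualFeasible (n p : ℕ) (X : Matrix (Fin n) (Fin p) ℝ)
    (l0 l2 M : ℝ) (ρ : Fin n → ℝ) (μ : Fin p → ℝ) : Prop :=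
  ∀ i, |∑ j, ρ j * X j i| - μ i ≤ l0 / M + l2 * M

/-
Since `√(λ0/λ2) > M`, the penalty is `λ|β|` with `λ = λ0/M + λ2 M`, and for every `β`, `ρ`, `μ`
  `F(β) - h2(ρ, μ) = ½‖y - Xβ + ρ‖² + Σᵢ (λ|βᵢ| + M|μᵢ| + βᵢ ρᵀXᵢ)`.
For `‖β‖∞ ≤ M` and dual-feasible `(ρ, μ)` every summand is nonnegative, which is weak duality.
At `(β*, ρ*, μ*)` the square vanishes, and so does each summand: with `gᵢ = r*ᵀXᵢ`, minimality
of `β*` along coordinate `i` gives `λ|β*ᵢ| ≤ β*ᵢ gᵢ` (shrink `β*ᵢ` towards `0`) and, when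
`|β*ᵢ| < M`, `|gᵢ| ≤ λ` (move `β*ᵢ` either way), which is exactly `β*ᵢ gᵢ = λ|β*ᵢ| + M μ*ᵢ`.
-/

open Filter Topology

lemma psi_of_lt {l0 l2 M : ℝ} (hcase : M < Real.sqrt (l0 / l2)) (b : ℝ) :
    psi l0 l2 M b = (l0 / M + l2 * M) * |b| :=
  if_neg hcase.not_ge

lemma nonneg_of_eventually_nonneg_mul_add_sq {a c : ℝ}
    (h : ∀ᶠ ε in 𝓝[>] 0, 0 ≤ ε * c + ε ^ 2 * a) : 0 ≤ c := by
  have hdiv : ∀ᶠ ε in 𝓝[>] (0 : ℝ), 0 ≤ c + ε * a := by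
    filter_upwards [h, self_mem_nhdsWithin] with ε hε (hpos : 0 < ε)
    have hfac : ε * c + ε ^ 2 * a = ε * (c + ε * a) := by ring
    exact (mul_nonneg_iff_of_pos_left hpos).mp (hfac ▸ hε)
  have hlim : Tendsto (fun ε : ℝ => c + ε * a) (𝓝[>] 0) (𝓝 c) := by
    have hcont : Continuous fun ε : ℝ => c + ε * a := by fun_prop
    simpa using (hcont.tendsto 0).mono_left nhdsWithin_le_nhds
  exact ge_of_tendsto hlim hdiv

section BoxMinimum

variable {a b g lam M : ℝ}

lemma mul_abs_le_mul_of_box_min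
    (hmin : ∀ δ, |b + δ| ≤ M → 0 ≤ -(δ * g) + δ ^ 2 / 2 * a + lam * (|b + δ| - |b|))
    (hb : |b| ≤ M) : lam * |b| ≤ b * g := by
  refine sub_nonneg.mp (nonneg_of_eventually_nonneg_mul_add_sq (a := b ^ 2 / 2 * a) ?_)
  filter_upwards [Ioc_mem_nhdsGT one_pos] with ε ⟨hε0, hε1⟩
  have hshrink : |b + -(ε * b)| = (1 - ε) * |b| := by
    rw [show b + -(ε * b) = (1 - ε) * b by ring, abs_mul, abs_of_nonneg (by linarith)]
  have h := hmin (-(ε * b)) (by rw [hshrink]; nlinarith [abs_nonneg b])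
  rw [hshrink] at h
  linear_combination h

lemma abs_le_of_box_min
    (hmin : ∀ δ, |b + δ| ≤ M → 0 ≤ -(δ * g) + δ ^ 2 / 2 * a + lam * (|b + δ| - |b|))
    (hlam : 0 ≤ lam) (hb : |b| < M) : |g| ≤ lam := by
  have hdir : ∀ d, d * g ≤ lam * |d| := by
    intro d
    refine sub_nonneg.mp (nonneg_of_eventually_nonneg_mul_add_sq (a := d ^ 2 / 2 * a) ?_)
    have hnear : Tendsto (fun ε : ℝ => |b + ε * d|) (𝓝[>] 0) (𝓝 |b|) := by
      have hcont : Continuous fun ε : ℝ => |b + ε * d| := by fun_prop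
      simpa using (hcont.tendsto 0).mono_left nhdsWithin_le_nhds
    filter_upwards [hnear.eventually (eventually_lt_nhds hb), self_mem_nhdsWithin]
      with ε hε (hpos : 0 < ε)
    have h := hmin (ε * d) hε.le
    have htri : |b + ε * d| - |b| ≤ ε * |d| := by
      have := abs_add_le b (ε * d)
      rw [abs_mul, abs_of_pos hpos] at this
      linarith
    nlinarith [mul_le_mul_of_nonneg_left htri hlam]
  have hpos := hdir 1
  have hneg := hdir (-1)
  simp only [one_mul, abs_one, mul_one, neg_mul, abs_neg] at hpos hneg
  exact abs_le.mpr ⟨by linarith, hpos⟩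

end BoxMinimum

lemma kkt_of_first_order {b g lam M μ : ℝ} (hlam : 0 ≤ lam) (hM : 0 < M) (hb : |b| ≤ M)
    (hbound : lam * |b| ≤ b * g) (hinterior : |b| < M → |g| ≤ lam)
    (hμ : μ = if |b| = M then |g| - lam else 0) :
    0 ≤ μ ∧ |g| - μ ≤ lam ∧ b * g = lam * |b| + M * μ := by
  have hbg : b * g = |b| * |g| := by
    rw [← abs_mul, abs_of_nonneg ((mul_nonneg hlam (abs_nonneg b)).trans hbound)]
  split_ifs at hμ with hbM
  · rw [hbM] at hbound hbg
    have : lam ≤ |g| := le_of_mul_le_mul_left (by linarith) hM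
    exact ⟨by linarith, by linarith, by rw [hbg, hbM, hμ]; ring⟩
  · have hg := hinterior (lt_of_le_of_ne hb hbM)
    have := mul_le_mul_of_nonneg_left hg (abs_nonneg b)
    exact ⟨hμ.ge, by linarith, by rw [hμ]; linarith⟩

lemma neg_mul_le_of_abs_le_of_abs_sub_le {b c m lam M : ℝ} (hb : |b| ≤ M)
    (hc : |c| - m ≤ lam) :
    -(b * c) ≤ lam * |b| + M * |m| :=
  calc -(b * c) ≤ |b| * |c| := by rw [← abs_mul]; exact neg_le_abs _
    _ ≤ |b| * (lam + |m|) :=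
      mul_le_mul_of_nonneg_left (by linarith [le_abs_self m]) (abs_nonneg b)
    _ ≤ lam * |b| + M * |m| := by nlinarith [abs_nonneg m]

lemma sum_add_single_sub_sum {ι M N : Type*} [Fintype ι] [DecidableEq ι] [AddZeroClass M]
    [AddCommGroup N] (f : ι → M → N) (β : ι → M) (i : ι) (δ : M) :
    ∑ k, f k (β k + (Pi.single i δ : ι → M) k) - ∑ k, f k (β k) =
      f i (β i + δ) - f i (β i) := by
  rw [← Finset.sum_sub_distrib, Fintype.sum_eq_single i fun k hk => by simp [hk]]
  simp

section Objective

variable {n p : ℕ} (X : Matrix (Fin n) (Fin p) ℝ) (y : Fin n → ℝ) {l0 l2 M : ℝ}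

lemma sum_mul_sum_comm (ρ : Fin n → ℝ) (β : Fin p → ℝ) :
    ∑ j, ρ j * ∑ i, X j i * β i = ∑ i, β i * ∑ j, ρ j * X j i := by
  simp_rw [Finset.mul_sum]
  rw [Finset.sum_comm]
  exact Finset.sum_congr rfl fun _ _ => Finset.sum_congr rfl fun _ _ => by ring

lemma Fobj_add_single_sub (β : Fin p → ℝ) (i : Fin p) (δ : ℝ) :
    Fobj n p X y l0 l2 M (β + Pi.single i δ : Fin p → ℝ) - Fobj n p X y l0 l2 M β =
      -(δ * ∑ j, (y j - ∑ k, X j k * β k) * X j i) + δ ^ 2 / 2 * ∑ j, X j i ^ 2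
        + (psi l0 l2 M (β i + δ) - psi l0 l2 M (β i)) := by
  have hpsi := sum_add_single_sub_sum (fun _ => psi l0 l2 M) β i δ
  have hfit : ∀ j, ∑ k, X j k * (β + Pi.single i δ : Fin p → ℝ) k =
      ∑ k, X j k * β k + X j i * δ := by
    intro j
    have := sum_add_single_sub_sum (fun k t => X j k * t) β i δ
    simp only [Pi.add_apply]
    linear_combination this
  have hquad : ∑ j, (y j - ∑ k, X j k * (β + Pi.single i δ : Fin p → ℝ) k) ^ 2 =
      ∑ j, (y j - ∑ k, X j k * β k) ^ 2 - 2 * (δ * ∑ j, (y j - ∑ k, X j k * β k) * X j i)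
        + δ ^ 2 * ∑ j, X j i ^ 2 := by
    simp only [hfit, Finset.mul_sum, ← Finset.sum_sub_distrib, ← Finset.sum_add_distrib]
    exact Finset.sum_congr rfl fun _ _ => by ring
  simp only [Fobj, Pi.add_apply] at hpsi ⊢
  linear_combination hpsi + hquad / 2

lemma Fobj_sub_h2 (hcase : M < Real.sqrt (l0 / l2)) (β : Fin p → ℝ) (ρ : Fin n → ℝ)
    (μ : Fin p → ℝ) :
    Fobj n p X y l0 l2 M β - h2 n p y M ρ μ =
      1 / 2 * ∑ j, (y j - ∑ i, X j i * β i + ρ j) ^ 2 +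
        ∑ i, ((l0 / M + l2 * M) * |β i| + M * |μ i| + β i * ∑ j, ρ j * X j i) := by
  have hy : ∑ j, ρ j * y j =
      ∑ j, ρ j * (y j - ∑ i, X j i * β i) + ∑ i, β i * ∑ j, ρ j * X j i := by
    rw [← sum_mul_sum_comm, ← Finset.sum_add_distrib]
    exact Finset.sum_congr rfl fun _ _ => by ring
  have hsq : ∑ j, (y j - ∑ i, X j i * β i + ρ j) ^ 2 = ∑ j, (y j - ∑ i, X j i * β i) ^ 2
      + 2 * ∑ j, ρ j * (y j - ∑ i, X j i * β i) + ∑ j, ρ j ^ 2 := by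
    simp only [Finset.mul_sum, ← Finset.sum_add_distrib]
    exact Finset.sum_congr rfl fun _ _ => by ring
  simp only [Fobj, h2, psi_of_lt hcase, Finset.sum_add_distrib, ← Finset.mul_sum]
  linear_combination hy - hsq / 2

lemma h2_le_Fobj (hcase : M < Real.sqrt (l0 / l2)) {β : Fin p → ℝ} (hβ : ∀ i, |β i| ≤ M)
    {ρ : Fin n → ℝ} {μ : Fin p → ℝ} (hfeas : dualFeasible n p X l0 l2 M ρ μ) :
    h2 n p y M ρ μ ≤ Fobj n p X y l0 l2 M β := by
  have hgap := Fobj_sub_h2 X y hcase β ρ μ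
  have hsq : 0 ≤ ∑ j, (y j - ∑ i, X j i * β i + ρ j) ^ 2 :=
    Finset.sum_nonneg fun _ _ => sq_nonneg _
  have hpen : 0 ≤ ∑ i, ((l0 / M + l2 * M) * |β i| + M * |μ i| + β i * ∑ j, ρ j * X j i) :=
    Finset.sum_nonneg fun i _ => by
      linarith [neg_mul_le_of_abs_le_of_abs_sub_le (hβ i) (hfeas i)]
  linarith

lemma coord_perturb_nonneg_of_box_min (hcase : M < Real.sqrt (l0 / l2)) {β : Fin p → ℝ}
    (hmin : ∀ β' : Fin p → ℝ, (∀ i, |β' i| ≤ M) →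
      Fobj n p X y l0 l2 M β ≤ Fobj n p X y l0 l2 M β')
    (hβ : ∀ i, |β i| ≤ M) (i : Fin p) (δ : ℝ) (hδ : |β i + δ| ≤ M) :
    0 ≤ -(δ * ∑ j, (y j - ∑ k, X j k * β k) * X j i) + δ ^ 2 / 2 * ∑ j, X j i ^ 2
      + (l0 / M + l2 * M) * (|β i + δ| - |β i|) := by
  have hbox : ∀ k, |(β + Pi.single i δ : Fin p → ℝ) k| ≤ M := by
    intro k
    by_cases hk : k = i
    · subst hk; simpa using hδ
    · simpa [hk] using hβ k
  have hstep := Fobj_add_single_sub X y β i δ (l0 := l0) (l2 := l2) (M := M)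
  rw [psi_of_lt hcase, psi_of_lt hcase] at hstep
  linarith [hmin _ hbox]

end Objective

theorem dual_optimal_case_gt
    (n p : ℕ) (X : Matrix (Fin n) (Fin p) ℝ) (y : Fin n → ℝ)
    (l0 l2 M : ℝ) (hl0 : 0 < l0) (hl2 : 0 < l2) (hM : 0 < M)
    (hcase : M < Real.sqrt (l0 / l2))
    (βs : Fin p → ℝ) (hβs : ∀ i, |βs i| ≤ M)
    (hmin : ∀ β : Fin p → ℝ, (∀ i, |β i| ≤ M) → Fobj n p X y l0 l2 M βs ≤ Fobj n p X y l0 l2 M β)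
    (ρs : Fin n → ℝ) (hρs : ρs = fun j => -(y j - ∑ i, X j i * βs i))
    (μs : Fin p → ℝ)
    (hμs : ∀ i, μs i =
      if |βs i| = M then |∑ j, ρs j * X j i| - l0 / M - l2 * M else 0) :
    (∀ i, 0 ≤ μs i) ∧
      dualFeasible n p X l0 l2 M ρs μs ∧
      (∀ (ρ : Fin n → ℝ) (μ : Fin p → ℝ), dualFeasible n p X l0 l2 M ρ μ →
        h2 n p y M ρ μ ≤ h2 n p y M ρs μs) ∧
      h2 n p y M ρs μs = Fobj n p X y l0 l2 M βs := by
  have hlam : 0 ≤ l0 / M + l2 * M := by positivity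
  have hρX : ∀ i, ∑ j, ρs j * X j i = -∑ j, (y j - ∑ k, X j k * βs k) * X j i := by
    intro i
    simp only [hρs, neg_mul, Finset.sum_neg_distrib]
  have hkkt : ∀ i, 0 ≤ μs i ∧ |∑ j, ρs j * X j i| - μs i ≤ l0 / M + l2 * M ∧
      (l0 / M + l2 * M) * |βs i| + M * |μs i| + βs i * ∑ j, ρs j * X j i = 0 := by
    intro i
    have hpert := coord_perturb_nonneg_of_box_min X y hcase hmin hβs i
    obtain ⟨hμ0, hfeas, hslack⟩ := kkt_of_first_order hlam hM (hβs i)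
      (mul_abs_le_mul_of_box_min hpert (hβs i)) (fun h => abs_le_of_box_min hpert hlam h)
      ((hμs i).trans (by rw [hρX, abs_neg, sub_sub]))
    refine ⟨hμ0, by rwa [hρX, abs_neg], ?_⟩
    rw [abs_of_nonneg hμ0, hρX]
    linarith
  have hstrong : h2 n p y M ρs μs = Fobj n p X y l0 l2 M βs := by
    have hres : ∀ j, y j - ∑ i, X j i * βs i + ρs j = 0 := fun j => by simp [hρs]
    have hgap := Fobj_sub_h2 X y hcase βs ρs μs
    simp only [hres, fun i => (hkkt i).2.2, zero_pow two_ne_zero, Finset.sum_const_zero,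
      mul_zero, zero_add] at hgap
    linarith
  exact ⟨fun i => (hkkt i).1, fun i => (hkkt i).2.1,
    fun ρ μ hfeas => hstrong ▸ h2_le_Fobj X y hcase hβs hfeas, hstrong⟩
end

section
/- Let λ0, λ2, M be positive reals with √(λ0/λ2) ≤ M, and let a ∈ ℝ. Then the soft-thresholded value γ̂ = 0 if |a| ≤ 2M·λ2 and γ̂ = (|a| − 2M·λ2)·sign(a) otherwise, is a minimizer of the function γ ↦ [ (a − γ)²/(4λ2) − λ0 ]₊ + M·|γ| over ℝ, where [x]₊ = max(x, 0). -/
theorem gamma_soft_threshold_minimizer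
    (l0 l2 M a : ℝ) (hl0 : 0 < l0) (hl2 : 0 < l2) (hM : 0 < M)
    (hcase : Real.sqrt (l0 / l2) ≤ M)
    (γh : ℝ)
    (hγh : γh = if |a| ≤ 2 * M * l2 then 0 else (|a| - 2 * M * l2) * Real.sign a) :
    ∀ γ : ℝ,
      max ((a - γh) ^ 2 / (4 * l2) - l0) 0 + M * |γh| ≤
        max ((a - γ) ^ 2 / (4 * l2) - l0) 0 + M * |γ| := by
  have h4 : (0:ℝ) < 4 * l2 := by linarith
  have hl02 : l0 ≤ M ^ 2 * l2 := by
    have h0 : (0:ℝ) ≤ l0 / l2 := le_of_lt (div_pos hl0 hl2)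
    have h1 : l0 / l2 ≤ M ^ 2 := by
      nlinarith [Real.sq_sqrt h0, Real.sqrt_nonneg (l0 / l2)]
    calc l0 = (l0 / l2) * l2 := by field_simp
    _ ≤ M ^ 2 * l2 := by nlinarith
  intro γ
  have hmaxR : (a - γ) ^ 2 / (4 * l2) - l0 ≤ max ((a - γ) ^ 2 / (4 * l2) - l0) 0 :=
    le_max_left _ _
  have hmaxR0 : (0:ℝ) ≤ max ((a - γ) ^ 2 / (4 * l2) - l0) 0 := le_max_right _ _
  have hγnn : (0:ℝ) ≤ |γ| := abs_nonneg γ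
  by_cases h : |a| ≤ 2 * M * l2
  · rw [if_pos h] at hγh
    subst hγh
    simp only [sub_zero, abs_zero, mul_zero, add_zero]
    rcases le_or_gt (a ^ 2 / (4 * l2) - l0) 0 with h1 | h1
    · rw [max_eq_right h1]
      nlinarith
    · rw [max_eq_left h1.le]
      have key : a ^ 2 / (4 * l2) ≤ (a - γ) ^ 2 / (4 * l2) + M * |γ| := by
        have key2 : a ^ 2 ≤ (a - γ) ^ 2 + M * |γ| * (4 * l2) := by
          nlinarith [le_abs_self (a * γ), abs_mul a γ, mul_le_mul_of_nonneg_right h hγnn, sq_nonneg γ]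
        calc a ^ 2 / (4 * l2) ≤ ((a - γ) ^ 2 + M * |γ| * (4 * l2)) / (4 * l2) := by
              gcongr
        _ = (a - γ) ^ 2 / (4 * l2) + M * |γ| := by field_simp
      linarith
  · rw [if_neg h] at hγh
    push_neg at h
    have ha0 : a ≠ 0 := by
      intro h0
      rw [h0] at h
      simp at h
      nlinarith
    -- key facts about γh
    have hfacts : |γh| = |a| - 2 * M * l2 ∧ (a - γh) ^ 2 = (2 * M * l2) ^ 2 := by
      rcases lt_trichotomy a 0 with ha | ha | ha
      · rw [abs_of_neg ha] at h hγh ⊢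
        rw [Real.sign_of_neg ha] at hγh
        constructor
        · rw [hγh, abs_of_neg (by nlinarith)]; ring
        · rw [hγh]; ring
      · exact absurd ha ha0
      · rw [abs_of_pos ha] at h hγh ⊢
        rw [Real.sign_of_pos ha] at hγh
        constructor
        · rw [hγh, abs_of_pos (by nlinarith)]; ring
        · rw [hγh]; ring
    obtain ⟨habs, hsq⟩ := hfacts
    rw [hsq, habs]
    have hval : (2 * M * l2) ^ 2 / (4 * l2) = M ^ 2 * l2 := by field_simp; ring
    rw [hval, max_eq_left (by linarith)]
    -- LHS = M^2*l2 - l0 + M*(|a| - 2Ml2) = M*|a| - M^2*l2 - l0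
    have key : M * |a| - M ^ 2 * l2 - l0 ≤ (a - γ) ^ 2 / (4 * l2) - l0 + M * |γ| := by
      have tri : |a| ≤ |a - γ| + |γ| := by
        calc |a| = |(a - γ) + γ| := by ring_nf
        _ ≤ |a - γ| + |γ| := abs_add_le _ _
      have amgm : M * |a - γ| - M ^ 2 * l2 ≤ (a - γ) ^ 2 / (4 * l2) := by
        rw [le_div_iff₀ h4]
        nlinarith [sq_nonneg (|a - γ| - 2 * M * l2), sq_abs (a - γ)]
      nlinarith
    linarith [key.trans (by linarith : (a - γ) ^ 2 / (4 * l2) - l0 + M * |γ| ≤ max ((a - γ) ^ 2 / (4 * l2) - l0) 0 + M * |γ|)]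
end

section
/- Suppose √(λ0/λ2) ≤ M, ‖y‖₂ = 1, and ‖X_i‖₂ = 1 for all i ∈ [p]. Let β* be a minimizer of F over {β ∈ ℝᵖ : ‖β‖∞ ≤ M}, set α* = −(y − Xβ*) and γ*_i = (α*ᵀX_i − 2M·λ2·sign(α*ᵀX_i)) if |β*_i| = M and γ*_i = 0 otherwise. Let β̂ ∈ ℝᵖ, set α̂ = −(y − Xβ̂) and ε = ‖X(β* − β̂)‖₂. Then for each i ∈ [p], the infimum over γ ∈ ℝ of v(α̂, γ) (with X_i in place of the i-th column) satisfies inf_γ v(α̂, γ) ≤ c_i·ε + ε²/(4λ2) + v(α*, γ*_i), where c_i = 1/(2λ2) if |β*_i| < M and c_i = M if |β*_i| = M. -/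
lemma abs_le_of_sq_le_sq'' {x e : ℝ} (he : 0 ≤ e) (h : x ^ 2 ≤ e ^ 2) : |x| ≤ e := by
  nlinarith [abs_nonneg x, sq_abs x]

theorem vdual_inf_bound
    (n p : ℕ) (X : Matrix (Fin n) (Fin p) ℝ) (y : Fin n → ℝ)
    (l0 l2 M : ℝ) (hl0 : 0 < l0) (hl2 : 0 < l2) (hM : 0 < M)
    (hcase : Real.sqrt (l0 / l2) ≤ M)
    (hy : Real.sqrt (∑ j, (y j) ^ 2) = 1)
    (hX : ∀ i : Fin p, Real.sqrt (∑ j, (X j i) ^ 2) = 1)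
    (βs : Fin p → ℝ) (hβs : ∀ i, |βs i| ≤ M)
    (hmin : ∀ β : Fin p → ℝ, (∀ i, |β i| ≤ M) → Fobj n p X y l0 l2 M βs ≤ Fobj n p X y l0 l2 M β)
    (αs : Fin n → ℝ) (hαs : αs = fun j => -(y j - ∑ i, X j i * βs i))
    (γs : Fin p → ℝ)
    (hγs : ∀ i, γs i =
      if |βs i| = M
      then (∑ j, αs j * X j i) - 2 * M * l2 * Real.sign (∑ j, αs j * X j i)
      else 0)
    (βh : Fin p → ℝ)
    (αh : Fin n → ℝ) (hαh : αh = fun j => -(y j - ∑ i, X j i * βh i))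
    (ε : ℝ) (hε : ε = Real.sqrt (∑ j, (∑ i, X j i * (βs i - βh i)) ^ 2)) :
    ∀ i : Fin p,
      sInf {v : ℝ | ∃ g : ℝ, v = vdual n p X l0 l2 M αh i g} ≤
        (if |βs i| < M then 1 / (2 * l2) else M) * ε + ε ^ 2 / (4 * l2)
          + vdual n p X l0 l2 M αs i (γs i) := by
  intro i
  have hε0 : 0 ≤ ε := hε ▸ Real.sqrt_nonneg _
  have hεsq : ε ^ 2 = ∑ j, (∑ k, X j k * (βs k - βh k)) ^ 2 := by
    rw [hε, Real.sq_sqrt]; positivity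
  have hXi : (∑ j, (X j i) ^ 2) = 1 := by
    have h := Real.sq_sqrt (show (0:ℝ) ≤ ∑ j, (X j i) ^ 2 by positivity)
    rw [hX i] at h; simpa using h.symm
  have hysq : (∑ j, (y j) ^ 2) = 1 := by
    have h := Real.sq_sqrt (show (0:ℝ) ≤ ∑ j, (y j) ^ 2 by positivity)
    rw [hy] at h; simpa using h.symm
  set A := ∑ j, αs j * X j i with hAdef
  set B := ∑ j, αh j * X j i with hBdef
  -- |B - A| ≤ ε
  have hdiff : B - A = -∑ j, (∑ k, X j k * (βs k - βh k)) * X j i := by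
    rw [hAdef, hBdef, hαs, hαh, ← Finset.sum_sub_distrib, ← Finset.sum_neg_distrib]
    congr 1; funext j
    simp only
    simp only [mul_sub]
    rw [Finset.sum_sub_distrib]
    ring
  have hBA : |B - A| ≤ ε := by
    apply abs_le_of_sq_le_sq'' hε0
    rw [hdiff, neg_pow, hεsq]
    calc (-1 : ℝ) ^ 2 * (∑ j, (∑ k, X j k * (βs k - βh k)) * X j i) ^ 2
        = (∑ j, (∑ k, X j k * (βs k - βh k)) * X j i) ^ 2 := by ring
      _ ≤ (∑ j, (∑ k, X j k * (βs k - βh k)) ^ 2) * ∑ j, (X j i) ^ 2 :=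
          Finset.sum_mul_sq_le_sq_mul_sq _ _ _
      _ = ∑ j, (∑ k, X j k * (βs k - βh k)) ^ 2 := by rw [hXi, mul_one]
  -- set is bounded below and our choices are members
  have hbdd : BddBelow {v : ℝ | ∃ g : ℝ, v = vdual n p X l0 l2 M αh i g} := by
    refine ⟨0, fun v hv => ?_⟩
    obtain ⟨g, rfl⟩ := hv
    unfold vdual
    have h1 : (0:ℝ) ≤ max ((B - g) ^ 2 / (4 * l2) - l0) 0 := le_max_right _ _
    have h2 : (0:ℝ) ≤ M * |g| := by positivity
    linarith
  have hkey : ∀ g : ℝ, sInf {v : ℝ | ∃ g : ℝ, v = vdual n p X l0 l2 M αh i g}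
      ≤ vdual n p X l0 l2 M αh i g := fun g => csInf_le hbdd ⟨g, rfl⟩
  by_cases hcaseM : |βs i| = M
  · -- boundary case
    have hlt : ¬ |βs i| < M := by rw [hcaseM]; exact lt_irrefl M
    rw [if_neg hlt]
    set g0 := γs i with hg0
    refine le_trans (hkey (g0 + (B - A))) ?_
    unfold vdual
    have hq : B - (g0 + (B - A)) = A - g0 := by ring
    rw [hq]
    have habs : M * |g0 + (B - A)| ≤ M * |g0| + M * ε := by
      have := abs_add_le g0 (B - A)
      nlinarith [hBA, hM.le]
    have hε2 : 0 ≤ ε ^ 2 / (4 * l2) := by positivity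
    have hMε : M * ε ≤ M * ε := le_refl _
    linarith
  · -- interior case
    have hlt : |βs i| < M := lt_of_le_of_ne (hβs i) hcaseM
    rw [if_pos hlt]
    have hg0 : γs i = 0 := by rw [hγs i, if_neg hcaseM]
    rw [hg0]
    -- |A| ≤ 1
    have hFle : Fobj n p X y l0 l2 M βs ≤ Fobj n p X y l0 l2 M (fun _ => 0) := by
      apply hmin; intro k; simpa using hM.le
    have hF0 : Fobj n p X y l0 l2 M (fun _ => 0) = 1 / 2 := by
      unfold Fobj
      have : ∀ k : Fin p, psi l0 l2 M ((fun _ => (0:ℝ)) k) = 0 := by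
        intro k; unfold psi
        rw [if_pos hcase]
        simp [revHuber]
      rw [Finset.sum_congr rfl (fun k _ => this k)]
      simp [hysq]
    have hpsi_nonneg : ∀ k : Fin p, 0 ≤ psi l0 l2 M (βs k) := by
      intro k; unfold psi
      rw [if_pos hcase]
      have := revHuber_nonneg (βs k * Real.sqrt (l2 / l0))
      positivity
    have hres : ∑ j, (y j - ∑ k, X j k * βs k) ^ 2 ≤ 1 := by
      have h1 : (1/2 : ℝ) * ∑ j, (y j - ∑ k, X j k * βs k) ^ 2 ≤ Fobj n p X y l0 l2 M βs := by
        unfold Fobj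
        have : 0 ≤ ∑ k, psi l0 l2 M (βs k) := Finset.sum_nonneg (fun k _ => hpsi_nonneg k)
        linarith
      rw [hF0] at hFle
      linarith
    have hαs_sq : ∑ j, (αs j) ^ 2 ≤ 1 := by
      calc ∑ j, (αs j) ^ 2 = ∑ j, (y j - ∑ k, X j k * βs k) ^ 2 := by
            rw [hαs]; exact Finset.sum_congr rfl (fun j _ => by ring)
        _ ≤ 1 := hres
    have hA1 : |A| ≤ 1 := by
      apply abs_le_of_sq_le_sq'' zero_le_one
      rw [one_pow]
      calc A ^ 2 ≤ (∑ j, (αs j) ^ 2) * ∑ j, (X j i) ^ 2 :=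
            Finset.sum_mul_sq_le_sq_mul_sq _ _ _
        _ ≤ 1 := by rw [hXi, mul_one]; exact hαs_sq
    refine le_trans (hkey 0) ?_
    unfold vdual
    simp only [sub_zero, abs_zero, mul_zero, add_zero]
    -- max(B²/(4l2)-l0, 0) ≤ ε/(2l2) + ε²/(4l2) + max(A²/(4l2)-l0,0)
    have hd : 0 ≤ 1 / (2 * l2) * ε + ε ^ 2 / (4 * l2) := by positivity
    have hB2 : B ^ 2 ≤ A ^ 2 + 2 * ε + ε ^ 2 := by
      have hd2 : (B - A) ^ 2 ≤ ε ^ 2 := by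
        have := pow_le_pow_left₀ (abs_nonneg (B - A)) hBA 2
        rwa [sq_abs] at this
      have hAd : A * (B - A) ≤ ε :=
        calc A * (B - A) ≤ |A * (B - A)| := le_abs_self _
          _ = |A| * |B - A| := abs_mul _ _
          _ ≤ 1 * ε := mul_le_mul hA1 hBA (abs_nonneg _) zero_le_one
          _ = ε := one_mul _
      have hexp : B ^ 2 = A ^ 2 + 2 * (A * (B - A)) + (B - A) ^ 2 := by ring
      linarith
    have hx : B ^ 2 / (4 * l2) - l0 ≤ (A ^ 2 / (4 * l2) - l0) + (1 / (2 * l2) * ε + ε ^ 2 / (4 * l2)) := by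
      have h4 : (0:ℝ) < 4 * l2 := by linarith
      have h5 : B ^ 2 / (4 * l2) ≤ (A ^ 2 + 2 * ε + ε ^ 2) / (4 * l2) := by gcongr
      have h6 : (A ^ 2 + 2 * ε + ε ^ 2) / (4 * l2) = A ^ 2 / (4 * l2) + (1 / (2 * l2) * ε + ε ^ 2 / (4 * l2)) := by
        field_simp; ring
      linarith
    have hmax : max (B ^ 2 / (4 * l2) - l0) 0 ≤
        max (A ^ 2 / (4 * l2) - l0) 0 + (1 / (2 * l2) * ε + ε ^ 2 / (4 * l2)) := by
      apply max_le
      · exact hx.trans (by gcongr; exact le_max_left _ _)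
      · have := le_max_right (A ^ 2 / (4 * l2) - l0) 0
        linarith
    linarith
end

section
/- Suppose √(λ0/λ2) ≤ M, ‖y‖₂ = 1, and ‖X_i‖₂ = 1 for all i ∈ [p]. Let β* be a minimizer of F over {β ∈ ℝᵖ : ‖β‖∞ ≤ M}, set α* = −(y − Xβ*) and γ*_i = (α*ᵀX_i − 2M·λ2·sign(α*ᵀX_i)) if |β*_i| = M and γ*_i = 0 otherwise. Let β̂ ∈ ℝᵖ with ‖β̂‖∞ ≤ M satisfy |⟨y − Xβ̂, X_i⟩| ≤ 2√(λ0·λ2) for every i ∉ Supp(β̂). Set α̂ = −(y − Xβ̂), γ̂_i = 0 if |α̂ᵀX_i| ≤ 2M·λ2 and γ̂_i = (|α̂ᵀX_i| − 2M·λ2)·sign(α̂ᵀX_i) otherwise, ε = ‖X(β* − β̂)‖₂, k = |Supp(β̂)|, k₁ = |{i ∈ Supp(β̂) : |β*_i| < M}|, and k₂ = |{i ∈ Supp(β̂) : |β*_i| = M}|. Then h1(α̂, γ̂) ≥ h1(α*, γ*) − ε·(2 + k₁/(2λ2) + k₂·M) − ε²·(1/2 + k/(4λ2)). -/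
/-- Cauchy–Schwarz with absolute value. -/
lemma abs_sum_mul_le' {m : ℕ} (f g : Fin m → ℝ) :
    |∑ j, f j * g j| ≤ Real.sqrt (∑ j, f j ^ 2) * Real.sqrt (∑ j, g j ^ 2) := by
  rw [abs_le]
  constructor
  · have h := Real.sum_mul_le_sqrt_mul_sqrt Finset.univ (fun j => -(f j)) g
    simp only [neg_mul, neg_sq] at h
    rw [Finset.sum_neg_distrib] at h
    linarith
  · exact Real.sum_mul_le_sqrt_mul_sqrt Finset.univ f g

/-- The soft-thresholded value minimizes `g ↦ [(w-g)²/(4λ2) − λ0]₊ + M|g|`. -/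
lemma thresh_min (l0 l2 M w g gh : ℝ) (hl0 : 0 < l0) (hl2 : 0 < l2) (hM : 0 < M)
    (hc : l0 ≤ M^2 * l2)
    (hgh : gh = if |w| ≤ 2*M*l2 then 0 else (|w| - 2*M*l2) * Real.sign w) :
    max ((w - gh)^2/(4*l2) - l0) 0 + M*|gh| ≤ max ((w - g)^2/(4*l2) - l0) 0 + M*|g| := by
  have h4 : (0:ℝ) < 4*l2 := by linarith
  by_cases hw : |w| ≤ 2*M*l2
  · rw [hgh, if_pos hw]
    simp only [sub_zero, abs_zero, mul_zero, add_zero]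
    apply max_le
    · have key : w^2 ≤ (w-g)^2 + 4*l2*(M*|g|) := by
        nlinarith [le_abs_self (w*g), abs_mul w g,
          mul_le_mul_of_nonneg_right hw (abs_nonneg g), sq_nonneg g]
      have h2 : w^2/(4*l2) ≤ ((w-g)^2 + 4*l2*(M*|g|))/(4*l2) := by gcongr
      have h3 : ((w-g)^2 + 4*l2*(M*|g|))/(4*l2) = (w-g)^2/(4*l2) + M*|g| := by
        rw [add_div, mul_div_cancel_left₀ _ (ne_of_gt h4)]
      have h5 := le_max_left ((w-g)^2/(4*l2) - l0) (0:ℝ)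
      linarith
    · have h6 : 0 ≤ M*|g| := mul_nonneg hM.le (abs_nonneg g)
      have h5 := le_max_right ((w-g)^2/(4*l2) - l0) (0:ℝ)
      linarith
  · push_neg at hw
    have hMl2 : 0 < 2*M*l2 := by positivity
    have hw0 : w ≠ 0 := by
      intro h; rw [h, abs_zero] at hw; linarith
    have hs : Real.sign w * |w| = w := by
      rcases lt_trichotomy w 0 with h | h | h
      · rw [Real.sign_of_neg h, abs_of_neg h]; ring
      · exact absurd h hw0
      · rw [Real.sign_of_pos h, abs_of_pos h]; ring
    have hs1 : |Real.sign w| = 1 := by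
      rcases lt_trichotomy w 0 with h | h | h
      · rw [Real.sign_of_neg h]; norm_num
      · exact absurd h hw0
      · rw [Real.sign_of_pos h]; norm_num
    have hs2 : (Real.sign w)^2 = 1 := by
      have := sq_abs (Real.sign w); rw [hs1] at this; linarith [this]
    have hghe : gh = (|w| - 2*M*l2) * Real.sign w := by rw [hgh, if_neg (not_le.mpr hw)]
    have e1 : w - gh = 2*M*l2 * Real.sign w := by
      rw [hghe]; linear_combination -hs
    have e2 : (w - gh)^2 = 4*M^2*l2^2 := by
      rw [e1, mul_pow, hs2, mul_one]; ring
    have e3 : (w - gh)^2/(4*l2) = M^2*l2 := by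
      rw [e2]; field_simp
    have e4 : |gh| = |w| - 2*M*l2 := by
      rw [hghe, abs_mul, hs1, mul_one, abs_of_pos (by linarith)]
    have e5 : max ((w - gh)^2/(4*l2) - l0) 0 = M^2*l2 - l0 := by
      rw [e3]; exact max_eq_left (by linarith)
    rw [e5, e4]
    have key : M*|w| - M^2*l2 - M*|g| ≤ (w-g)^2/(4*l2) := by
      rw [le_div_iff₀ h4]
      nlinarith [sq_nonneg (|w-g| - 2*M*l2), sq_abs (w-g),
        abs_sub_abs_le_abs_sub w g, mul_pos hM hl2, abs_nonneg g, abs_nonneg (w-g)]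
    have h5 := le_max_left ((w-g)^2/(4*l2) - l0) (0:ℝ)
    linarith

lemma psi_nonneg (l0 l2 M b : ℝ) (hl0 : 0 < l0) (hl2 : 0 < l2) (hM : 0 < M) :
    0 ≤ psi l0 l2 M b := by
  unfold psi revHuber
  split
  · split <;> positivity
  · have h1 : 0 ≤ l0 / M + l2 * M := by positivity
    exact mul_nonneg h1 (abs_nonneg b)

lemma vdual_nonneg (n p : ℕ) (X : Matrix (Fin n) (Fin p) ℝ)
    (l0 l2 M : ℝ) (hM : 0 < M) (α : Fin n → ℝ) (i : Fin p) (g : ℝ) :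
    0 ≤ vdual n p X l0 l2 M α i g := by
  unfold vdual
  have := le_max_right (((∑ j, α j * X j i) - g) ^ 2 / (4 * l2) - l0) (0:ℝ)
  have := mul_nonneg hM.le (abs_nonneg g)
  linarith


lemma abs_sign_ne_zero (u : ℝ) (hu : u ≠ 0) : |Real.sign u| = 1 := by
  rcases lt_trichotomy u 0 with h | h | h
  · rw [Real.sign_of_neg h]; norm_num
  · exact absurd h hu
  · rw [Real.sign_of_pos h]; norm_num

lemma sq_sign_ne_zero (u : ℝ) (hu : u ≠ 0) : (Real.sign u)^2 = 1 := by
  have := sq_abs (Real.sign u); rw [abs_sign_ne_zero u hu] at this; linarith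

lemma max_part_eq (l0 l2 M s x : ℝ) (hl2 : 0 < l2) (hc : l0 ≤ M^2*l2) (hs2 : s^2 = 1) :
    max ((x - (x - 2*M*l2*s))^2/(4*l2) - l0) 0 = M^2*l2 - l0 := by
  have e : (x - (x - 2*M*l2*s))^2 = 4*M^2*l2^2 := by
    have h : x - (x - 2*M*l2*s) = 2*M*l2*s := by ring
    rw [h, mul_pow, hs2, mul_one]; ring
  rw [e]
  have h2 : 4*M^2*l2^2/(4*l2) = M^2*l2 := by field_simp
  rw [h2]; exact max_eq_left (by linarith)

set_option maxHeartbeats 1000000 in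
theorem dual_bound_case_le
    (n p : ℕ) (X : Matrix (Fin n) (Fin p) ℝ) (y : Fin n → ℝ)
    (l0 l2 M : ℝ) (hl0 : 0 < l0) (hl2 : 0 < l2) (hM : 0 < M)
    (hcase : Real.sqrt (l0 / l2) ≤ M)
    (hy : Real.sqrt (∑ j, (y j) ^ 2) = 1)
    (hX : ∀ i : Fin p, Real.sqrt (∑ j, (X j i) ^ 2) = 1)
    (βs : Fin p → ℝ) (hβs : ∀ i, |βs i| ≤ M)
    (hmin : ∀ β : Fin p → ℝ, (∀ i, |β i| ≤ M) → Fobj n p X y l0 l2 M βs ≤ Fobj n p X y l0 l2 M β)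
    (αs : Fin n → ℝ) (hαs : αs = fun j => -(y j - ∑ i, X j i * βs i))
    (γs : Fin p → ℝ)
    (hγs : ∀ i, γs i =
      if |βs i| = M
      then (∑ j, αs j * X j i) - 2 * M * l2 * Real.sign (∑ j, αs j * X j i)
      else 0)
    (βh : Fin p → ℝ) (hβh : ∀ i, |βh i| ≤ M)
    (hopt : ∀ i, βh i = 0 → |∑ j, (y j - ∑ k, X j k * βh k) * X j i| ≤ 2 * Real.sqrt (l0 * l2))
    (αh : Fin n → ℝ) (hαh : αh = fun j => -(y j - ∑ i, X j i * βh i))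
    (γh : Fin p → ℝ)
    (hγh : ∀ i, γh i =
      if |∑ j, αh j * X j i| ≤ 2 * M * l2 then 0
      else (|∑ j, αh j * X j i| - 2 * M * l2) * Real.sign (∑ j, αh j * X j i))
    (ε : ℝ) (hε : ε = Real.sqrt (∑ j, (∑ i, X j i * (βs i - βh i)) ^ 2))
    (k k1 k2 : ℕ)
    (hk : k = (Finset.univ.filter (fun i : Fin p => βh i ≠ 0)).card)
    (hk1 : k1 = (Finset.univ.filter (fun i : Fin p => βh i ≠ 0 ∧ |βs i| < M)).card)
    (hk2 : k2 = (Finset.univ.filter (fun i : Fin p => βh i ≠ 0 ∧ |βs i| = M)).card) :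
    h1 n p X y l0 l2 M αh γh ≥
      h1 n p X y l0 l2 M αs γs
        - ε * (2 + (k1 : ℝ) / (2 * l2) + (k2 : ℝ) * M)
        - ε ^ 2 * (1 / 2 + (k : ℝ) / (4 * l2)) := by
  have h4 : (0:ℝ) < 4*l2 := by linarith
  -- l0 ≤ M² l2
  have hc : l0 ≤ M^2 * l2 := by
    have h1 : l0 / l2 ≤ M^2 := by
      have hnn : (0:ℝ) ≤ l0 / l2 := le_of_lt (div_pos hl0 hl2)
      nlinarith [Real.sq_sqrt hnn, Real.sqrt_nonneg (l0/l2)]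
    rw [div_le_iff₀ hl2] at h1
    linarith
  have hy2 : ∑ j, (y j)^2 = 1 := Real.sqrt_eq_one.mp hy
  have hX2 : ∀ i, ∑ j, (X j i)^2 = 1 := fun i => Real.sqrt_eq_one.mp (hX i)
  have hε0 : 0 ≤ ε := hε ▸ Real.sqrt_nonneg _
  have hεsq : ∑ j, (∑ i, X j i * (βs i - βh i))^2 = ε^2 := by
    rw [hε, Real.sq_sqrt (Finset.sum_nonneg (fun j _ => sq_nonneg _))]
  -- the difference vector
  have hdiff : ∀ j, αh j - αs j = -(∑ i, X j i * (βs i - βh i)) := by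
    intro j
    rw [hαs, hαh]
    simp only [mul_sub, Finset.sum_sub_distrib]
    ring
  have hdsq : ∑ j, (αh j - αs j)^2 = ε^2 := by
    rw [← hεsq]
    exact Finset.sum_congr rfl (fun j _ => by rw [hdiff j]; ring)
  -- ‖αs‖² ≤ 1
  have hnas : ∑ j, (αs j)^2 ≤ 1 := by
    have h0 := hmin (fun _ => 0) (fun i => by simp [abs_of_nonneg, le_of_lt hM])
    unfold Fobj at h0
    simp only [mul_zero, Finset.sum_const_zero, sub_zero, psi_zero, add_zero] at h0
    rw [hy2] at h0
    have hps : 0 ≤ ∑ i, psi l0 l2 M (βs i) :=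
      Finset.sum_nonneg (fun i _ => psi_nonneg l0 l2 M (βs i) hl0 hl2 hM)
    have heq : ∑ j, (αs j)^2 = ∑ j, (y j - ∑ i, X j i * βs i)^2 := by
      refine Finset.sum_congr rfl (fun j _ => ?_)
      rw [hαs]; ring
    rw [heq]; linarith
  have hsqas : Real.sqrt (∑ j, (αs j)^2) ≤ 1 := by
    rw [← Real.sqrt_one]
    exact Real.sqrt_le_sqrt hnas
  have hsqd : Real.sqrt (∑ j, (αh j - αs j)^2) = ε := by
    rw [hdsq, Real.sqrt_sq hε0]
  -- quadratic part
  have hcs1 : |∑ j, αs j * (αh j - αs j)| ≤ ε := by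
    have := abs_sum_mul_le' αs (fun j => αh j - αs j)
    rw [hsqd] at this
    calc |∑ j, αs j * (αh j - αs j)| ≤ Real.sqrt (∑ j, (αs j)^2) * ε := this
      _ ≤ 1 * ε := by gcongr
      _ = ε := one_mul ε
  have hcs2 : |∑ j, (αh j - αs j) * y j| ≤ ε := by
    have := abs_sum_mul_le' (fun j => αh j - αs j) y
    rw [hsqd, hy] at this
    simpa using this
  have e1 : ∑ j, (αh j)^2 = ∑ j, (αs j)^2 + 2 * ∑ j, αs j * (αh j - αs j) + ε^2 := by
    rw [← hdsq, Finset.mul_sum, ← Finset.sum_add_distrib, ← Finset.sum_add_distrib]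
    exact Finset.sum_congr rfl (fun j _ => by ring)
  have e2 : ∑ j, αh j * y j = ∑ j, αs j * y j + ∑ j, (αh j - αs j) * y j := by
    rw [← Finset.sum_add_distrib]
    exact Finset.sum_congr rfl (fun j _ => by ring)
  have hquad : -(1/2) * ∑ j, (αh j)^2 - ∑ j, αh j * y j ≥
      -(1/2) * ∑ j, (αs j)^2 - ∑ j, αs j * y j - 2*ε - ε^2/2 := by
    rw [e1, e2]
    have := abs_le.mp hcs1
    have := abs_le.mp hcs2
    cases this with
    | intro a b => cases abs_le.mp hcs1 with
      | intro c d => nlinarith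
  -- per-column Cauchy-Schwarz facts
  have huw : ∀ i, |(∑ j, αh j * X j i) - (∑ j, αs j * X j i)| ≤ ε := by
    intro i
    have hrw : (∑ j, αh j * X j i) - (∑ j, αs j * X j i) = ∑ j, (αh j - αs j) * X j i := by
      rw [← Finset.sum_sub_distrib]
      exact Finset.sum_congr rfl (fun j _ => by ring)
    rw [hrw]
    have h := abs_sum_mul_le' (fun j => αh j - αs j) (fun j => X j i)
    rw [hsqd, hX i, mul_one] at h
    exact h
  have hu1 : ∀ i, |∑ j, αs j * X j i| ≤ 1 := by
    intro i
    have h := abs_sum_mul_le' αs (fun j => X j i)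
    rw [hX i, mul_one] at h
    exact h.trans hsqas
  -- γh minimizes the dual column objective
  have step1 : ∀ (i : Fin p) (g : ℝ), vdual n p X l0 l2 M αh i (γh i) ≤ vdual n p X l0 l2 M αh i g := by
    intro i g
    unfold vdual
    exact thresh_min l0 l2 M _ g (γh i) hl0 hl2 hM hc (hγh i)
  obtain ⟨A, hA⟩ : ∃ A : ℝ, A = ε/(2*l2) + ε^2/(4*l2) := ⟨_, rfl⟩
  obtain ⟨B, hB⟩ : ∃ B : ℝ, B = ε*M + ε^2/(4*l2) := ⟨_, rfl⟩
  have hA0 : 0 ≤ A := by rw [hA]; positivity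
  have hB0 : 0 ≤ B := by rw [hB]; positivity
  -- the per-index bound
  have hkey : ∀ i, vdual n p X l0 l2 M αh i (γh i) ≤ vdual n p X l0 l2 M αs i (γs i)
      + ((if βh i ≠ 0 ∧ |βs i| < M then A else 0) + (if βh i ≠ 0 ∧ |βs i| = M then B else 0)) := by
    intro i
    by_cases hb0 : βh i = 0
    · -- support-complement case : the hat dual term vanishes
      rw [if_neg (fun h : βh i ≠ 0 ∧ |βs i| < M => h.1 hb0),
        if_neg (fun h : βh i ≠ 0 ∧ |βs i| = M => h.1 hb0)]
      have hWeq : (∑ j, αh j * X j i) = -∑ j, (y j - ∑ k, X j k * βh k) * X j i := by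
        rw [hαh, ← Finset.sum_neg_distrib]
        exact Finset.sum_congr rfl (fun j _ => by ring)
      have hWs : |∑ j, αh j * X j i| ≤ 2 * Real.sqrt (l0 * l2) := by
        rw [hWeq, abs_neg]; exact hopt i hb0
      have hsle : Real.sqrt (l0 * l2) ≤ M * l2 := by
        have h1 : l0 * l2 ≤ (M*l2)^2 := by nlinarith
        calc Real.sqrt (l0 * l2) ≤ Real.sqrt ((M*l2)^2) := Real.sqrt_le_sqrt h1
          _ = M*l2 := Real.sqrt_sq (by positivity)
      have hWle : |∑ j, αh j * X j i| ≤ 2 * M * l2 := by linarith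
      have hgh0 : γh i = 0 := by rw [hγh i, if_pos hWle]
      have hW2 : (∑ j, αh j * X j i)^2 ≤ 4 * (l0 * l2) := by
        have h1 := abs_nonneg (∑ j, αh j * X j i)
        have h2 := Real.sq_sqrt (by positivity : (0:ℝ) ≤ l0 * l2)
        nlinarith [sq_abs (∑ j, αh j * X j i)]
      have hvh0 : vdual n p X l0 l2 M αh i (γh i) = 0 := by
        unfold vdual
        rw [hgh0]
        simp only [sub_zero, abs_zero, mul_zero, add_zero]
        apply max_eq_right
        rw [sub_nonpos, div_le_iff₀ h4]
        linarith
      rw [hvh0]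
      have := vdual_nonneg n p X l0 l2 M hM αs i (γs i)
      linarith
    · by_cases hbm : |βs i| < M
      · -- interior case
        rw [if_pos ⟨hb0, hbm⟩, if_neg (fun h => absurd h.2 (ne_of_lt hbm))]
        have hgs0 : γs i = 0 := by rw [hγs i, if_neg (ne_of_lt hbm)]
        have hmain : vdual n p X l0 l2 M αh i 0 ≤ vdual n p X l0 l2 M αs i 0 + A := by
          unfold vdual
          simp only [sub_zero, abs_zero, mul_zero, add_zero]
          have hW2 : (∑ j, αh j * X j i)^2 ≤ (∑ j, αs j * X j i)^2 + 2*ε + ε^2 := by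
            have h1 := abs_le.mp (huw i)
            have h2 := abs_le.mp (hu1 i)
            nlinarith [h1.1, h1.2, h2.1, h2.2, hε0]
          apply max_le
          · have hd1 : (∑ j, αh j * X j i)^2/(4*l2) ≤ ((∑ j, αs j * X j i)^2 + 2*ε + ε^2)/(4*l2) := by
              gcongr
            have hd2 : ((∑ j, αs j * X j i)^2 + 2*ε + ε^2)/(4*l2)
                = (∑ j, αs j * X j i)^2/(4*l2) + A := by
              rw [hA]; field_simp; ring
            have h5 := le_max_left ((∑ j, αs j * X j i)^2/(4*l2) - l0) (0:ℝ)
            linarith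
          · have h5 := le_max_right ((∑ j, αs j * X j i)^2/(4*l2) - l0) (0:ℝ)
            linarith
        rw [hgs0]
        calc vdual n p X l0 l2 M αh i (γh i) ≤ vdual n p X l0 l2 M αh i 0 := step1 i 0
          _ ≤ vdual n p X l0 l2 M αs i 0 + A := hmain
          _ ≤ vdual n p X l0 l2 M αs i 0 + (A + 0) := by linarith
      · -- boundary case |βs i| = M
        have hbM : |βs i| = M := le_antisymm (hβs i) (not_lt.mp hbm)
        rw [if_neg (fun h => absurd h.2 hbm), if_pos ⟨hb0, hbM⟩]
        have hgse : γs i = (∑ j, αs j * X j i) - 2*M*l2 * Real.sign (∑ j, αs j * X j i) := by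
          rw [hγs i, if_pos hbM]
        by_cases hU0 : (∑ j, αs j * X j i) = 0
        · -- degenerate : u i = 0
          have hgs0 : γs i = 0 := by rw [hgse, hU0, Real.sign_zero]; ring
          have hvs : vdual n p X l0 l2 M αs i (γs i) = 0 := by
            unfold vdual
            rw [hgs0, hU0]
            have hz : ((0:ℝ) - 0)^2/(4*l2) - l0 = -l0 := by norm_num
            rw [hz, abs_zero, mul_zero, add_zero]
            exact max_eq_right (by linarith)
          have hWe : |∑ j, αh j * X j i| ≤ ε := by
            have := huw i; rw [hU0, sub_zero] at this; exact this
          have hvh : vdual n p X l0 l2 M αh i 0 ≤ ε^2/(4*l2) := by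
            unfold vdual
            simp only [sub_zero, abs_zero, mul_zero, add_zero]
            apply max_le
            · have hW2 : (∑ j, αh j * X j i)^2 ≤ ε^2 := by
                nlinarith [abs_le.mp hWe, sq_abs (∑ j, αh j * X j i)]
              have : (∑ j, αh j * X j i)^2/(4*l2) ≤ ε^2/(4*l2) := by gcongr
              linarith
            · positivity
          have hMε : 0 ≤ ε*M := by positivity
          calc vdual n p X l0 l2 M αh i (γh i) ≤ vdual n p X l0 l2 M αh i 0 := step1 i 0
            _ ≤ ε^2/(4*l2) := hvh
            _ ≤ vdual n p X l0 l2 M αs i (γs i) + (0 + B) := by rw [hvs, hB]; linarith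
        · -- u i ≠ 0
          set s : ℝ := Real.sign (∑ j, αs j * X j i) with hsdef
          have hs2 : s^2 = 1 := sq_sign_ne_zero _ hU0
          set g' : ℝ := (∑ j, αh j * X j i) - 2*M*l2*s with hg'
          have hvg' : vdual n p X l0 l2 M αh i g'
              = (M^2*l2 - l0) + M * |(∑ j, αh j * X j i) - 2*M*l2*s| := by
            unfold vdual
            rw [hg', max_part_eq l0 l2 M s _ hl2 hc hs2]
          have hvs : vdual n p X l0 l2 M αs i (γs i)
              = (M^2*l2 - l0) + M * |(∑ j, αs j * X j i) - 2*M*l2*s| := by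
            unfold vdual
            rw [hgse, max_part_eq l0 l2 M s _ hl2 hc hs2]
          have htri : |(∑ j, αh j * X j i) - 2*M*l2*s| ≤ |(∑ j, αs j * X j i) - 2*M*l2*s| + ε := by
            have h1 := abs_sub_abs_le_abs_sub ((∑ j, αh j * X j i) - 2*M*l2*s)
              ((∑ j, αs j * X j i) - 2*M*l2*s)
            have h2 : ((∑ j, αh j * X j i) - 2*M*l2*s) - ((∑ j, αs j * X j i) - 2*M*l2*s)
                = (∑ j, αh j * X j i) - (∑ j, αs j * X j i) := by ring
            rw [h2] at h1
            linarith [huw i]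
          calc vdual n p X l0 l2 M αh i (γh i) ≤ vdual n p X l0 l2 M αh i g' := step1 i g'
            _ = (M^2*l2 - l0) + M * |(∑ j, αh j * X j i) - 2*M*l2*s| := hvg'
            _ ≤ (M^2*l2 - l0) + M * (|(∑ j, αs j * X j i) - 2*M*l2*s| + ε) := by
                have := mul_le_mul_of_nonneg_left htri hM.le
                linarith
            _ ≤ vdual n p X l0 l2 M αs i (γs i) + (0 + B) := by
                rw [hvs, hB]
                have h0 : 0 ≤ ε^2/(4*l2) := by positivity
                nlinarith
  -- sum the per-index bounds
  have hsum : ∑ i, vdual n p X l0 l2 M αh i (γh i)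
      ≤ ∑ i, vdual n p X l0 l2 M αs i (γs i)
        + ((k1:ℝ) * A + (k2:ℝ) * B) := by
    have h1 : ∑ i, vdual n p X l0 l2 M αh i (γh i)
        ≤ ∑ i, (vdual n p X l0 l2 M αs i (γs i)
          + ((if βh i ≠ 0 ∧ |βs i| < M then A else 0) + (if βh i ≠ 0 ∧ |βs i| = M then B else 0))) :=
      Finset.sum_le_sum (fun i _ => hkey i)
    rw [Finset.sum_add_distrib, Finset.sum_add_distrib] at h1
    have h2 : ∑ i, (if βh i ≠ 0 ∧ |βs i| < M then A else 0) = (k1:ℝ) * A := by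
      rw [← Finset.sum_filter, Finset.sum_const, nsmul_eq_mul, hk1]
    have h3 : ∑ i, (if βh i ≠ 0 ∧ |βs i| = M then B else 0) = (k2:ℝ) * B := by
      rw [← Finset.sum_filter, Finset.sum_const, nsmul_eq_mul, hk2]
    rw [h2, h3] at h1
    linarith
  -- k = k1 + k2
  have hk12 : (k:ℝ) = (k1:ℝ) + (k2:ℝ) := by
    have hset : Finset.univ.filter (fun i : Fin p => βh i ≠ 0)
        = Finset.univ.filter (fun i : Fin p => βh i ≠ 0 ∧ |βs i| < M)
          ∪ Finset.univ.filter (fun i : Fin p => βh i ≠ 0 ∧ |βs i| = M) := by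
      ext i
      simp only [Finset.mem_filter, Finset.mem_union, Finset.mem_univ, true_and]
      constructor
      · intro h
        rcases lt_or_eq_of_le (hβs i) with h' | h'
        · exact Or.inl ⟨h, h'⟩
        · exact Or.inr ⟨h, h'⟩
      · rintro (⟨h, _⟩ | ⟨h, _⟩) <;> exact h
    have hdisj : Disjoint (Finset.univ.filter (fun i : Fin p => βh i ≠ 0 ∧ |βs i| < M))
        (Finset.univ.filter (fun i : Fin p => βh i ≠ 0 ∧ |βs i| = M)) := by
      rw [Finset.disjoint_left]
      intro i hi1 hi2
      simp only [Finset.mem_filter] at hi1 hi2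
      exact absurd hi2.2.2 (ne_of_lt hi1.2.2)
    have : k = k1 + k2 := by
      rw [hk, hk1, hk2, hset, Finset.card_union_of_disjoint hdisj]
    rw [this]
    push_cast
    ring
  -- final arithmetic
  have hfin : ε * (2 + (k1:ℝ)/(2*l2) + (k2:ℝ)*M) + ε^2 * (1/2 + (k:ℝ)/(4*l2))
      = 2*ε + ε^2/2 + ((k1:ℝ) * A + (k2:ℝ) * B) := by
    rw [hA, hB, hk12]
    field_simp
    ring
  unfold h1
  linarith
end

section
/- Suppose √(λ0/λ2) > M, ‖y‖₂ = 1, and ‖X_i‖₂ = 1 for all i ∈ [p]. Let β* be a minimizer of F over {β ∈ ℝᵖ : ‖β‖∞ ≤ M}, set ρ* = −(y − Xβ*) and μ*_i = (|ρ*ᵀX_i| − λ0/M − λ2·M) if |β*_i| = M and μ*_i = 0 otherwise. Let β̂ ∈ ℝᵖ with ‖β̂‖∞ ≤ M satisfy |⟨y − Xβ̂, X_i⟩| ≤ λ0/M + λ2·M for every i ∉ Supp(β̂). Set ρ̂ = −(y − Xβ̂), μ̂_i = [ |ρ̂ᵀX_i| − λ0/M − λ2·M ]₊, ε = ‖X(β*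 − β̂)‖₂, and k = |Supp(β̂)|. Then (ρ̂, μ̂) is dual-feasible and h2(ρ̂, μ̂) ≥ h2(ρ*, μ*) − ε·(2 + M·k) − ε²/2. -/
lemma cs_abs {n : ℕ} (f g : Fin n → ℝ) :
    |∑ j, f j * g j| ≤ Real.sqrt (∑ j, f j ^ 2) * Real.sqrt (∑ j, g j ^ 2) := by
  rw [← Real.sqrt_sq_eq_abs, ← Real.sqrt_mul (by positivity)]
  exact Real.sqrt_le_sqrt (Finset.sum_mul_sq_le_sq_mul_sq _ _ _)

set_option maxHeartbeats 1000000 in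
theorem dual_bound_case_gt
    (n p : ℕ) (X : Matrix (Fin n) (Fin p) ℝ) (y : Fin n → ℝ)
    (l0 l2 M : ℝ) (hl0 : 0 < l0) (hl2 : 0 < l2) (hM : 0 < M)
    (hcase : M < Real.sqrt (l0 / l2))
    (hy : Real.sqrt (∑ j, (y j) ^ 2) = 1)
    (hX : ∀ i : Fin p, Real.sqrt (∑ j, (X j i) ^ 2) = 1)
    (βs : Fin p → ℝ) (hβs : ∀ i, |βs i| ≤ M)
    (hmin : ∀ β : Fin p → ℝ, (∀ i, |β i| ≤ M) → Fobj n p X y l0 l2 M βs ≤ Fobj n p X y l0 l2 M β)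
    (ρs : Fin n → ℝ) (hρs : ρs = fun j => -(y j - ∑ i, X j i * βs i))
    (μs : Fin p → ℝ)
    (hμs : ∀ i, μs i =
      if |βs i| = M then |∑ j, ρs j * X j i| - l0 / M - l2 * M else 0)
    (βh : Fin p → ℝ) (hβh : ∀ i, |βh i| ≤ M)
    (hopt : ∀ i, βh i = 0 →
      |∑ j, (y j - ∑ k, X j k * βh k) * X j i| ≤ l0 / M + l2 * M)
    (ρh : Fin n → ℝ) (hρh : ρh = fun j => -(y j - ∑ i, X j i * βh i))
    (μh : Fin p → ℝ)
    (hμh : ∀ i, μh i = max (|∑ j, ρh j * X j i| - l0 / M - l2 * M) 0)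
    (ε : ℝ) (hε : ε = Real.sqrt (∑ j, (∑ i, X j i * (βs i - βh i)) ^ 2))
    (k : ℕ) (hk : k = (Finset.univ.filter (fun i : Fin p => βh i ≠ 0)).card) :
    dualFeasible n p X l0 l2 M ρh μh ∧
      h2 n p y M ρh μh ≥
        h2 n p y M ρs μs - ε * (2 + M * (k : ℝ)) - ε ^ 2 / 2 := by
  set c : ℝ := l0 / M + l2 * M with hcdef
  have hc : (0:ℝ) < c := by rw [hcdef]; positivity
  have hpsi : ∀ b : ℝ, psi l0 l2 M b = c * |b| := by
    intro b
    rw [hcdef]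
    simp only [psi, if_neg (not_le.mpr hcase)]
  have hXsq : ∀ i, (∑ j, (X j i) ^ 2) = 1 := fun i => Real.sqrt_eq_one.mp (hX i)
  have hysq : (∑ j, (y j) ^ 2) = 1 := Real.sqrt_eq_one.mp hy
  set d : Fin n → ℝ := fun j => ρh j - ρs j with hddef
  have hρh_eq : ∀ j, ρh j = ρs j + d j := fun j => by simp only [hddef]; ring
  have hεd : ε = Real.sqrt (∑ j, d j ^ 2) := by
    rw [hε]
    congr 1
    apply Finset.sum_congr rfl
    intro j _
    have h1 : d j = ∑ i, X j i * (βh i - βs i) := by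
      have h2 : ∑ i, X j i * (βh i - βs i)
          = (∑ i, X j i * βh i) - ∑ i, X j i * βs i := by
        rw [← Finset.sum_sub_distrib]
        exact Finset.sum_congr rfl fun i _ => by ring
      simp only [hddef, hρs, hρh, h2]
      ring
    have h3 : ∑ i, X j i * (βs i - βh i) = -∑ i, X j i * (βh i - βs i) := by
      rw [← Finset.sum_neg_distrib]
      exact Finset.sum_congr rfl fun i _ => by ring
    rw [h3, h1]
    ring
  have hε0 : 0 ≤ ε := by rw [hε]; exact Real.sqrt_nonneg _
  have hdsq : ∑ j, d j ^ 2 = ε ^ 2 := by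
    rw [hεd, Real.sq_sqrt (by positivity)]
  -- Fobj at βs
  have eβs : Fobj n p X y l0 l2 M βs
      = (1/2) * (∑ j, ρs j ^ 2) + ∑ i, c * |βs i| := by
    simp only [Fobj, hpsi]
    have hterm : ∑ j, (y j - ∑ i, X j i * βs i) ^ 2 = ∑ j, ρs j ^ 2 :=
      Finset.sum_congr rfl fun j _ => by simp only [hρs]; ring
    rw [hterm]
  -- ‖ρs‖² ≤ 1
  have hρsum : ∑ j, ρs j ^ 2 ≤ 1 := by
    have h0 := hmin 0 (fun i => by simpa using hM.le)
    have e0 : Fobj n p X y l0 l2 M 0 = 1/2 := by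
      simp only [Fobj, Pi.zero_apply, mul_zero, Finset.sum_const_zero, sub_zero, hpsi,
        abs_zero, add_zero, hysq]
      norm_num
    have hpen : 0 ≤ ∑ i, c * |βs i| :=
      Finset.sum_nonneg fun i _ => by positivity
    rw [eβs, e0] at h0
    linarith
  -- KKT condition at non-boundary coordinates
  have hKKT : ∀ i : Fin p, |βs i| < M → |∑ j, ρs j * X j i| ≤ c := by
    intro i hlt
    set G : ℝ := ∑ j, ρs j * X j i with hG
    by_contra hgt
    push_neg at hgt
    set δ : ℝ := min (M - |βs i|) (|G| - c) with hδ
    have hδpos : 0 < δ := lt_min (by linarith) (by linarith)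
    set s : ℝ := if 0 ≤ G then 1 else -1 with hs
    have hsabs : |s| = 1 := by rw [hs]; split <;> simp
    have hsG : s * G = |G| := by
      rw [hs]
      split
      · rw [abs_of_nonneg ‹_›]; ring
      · rw [abs_of_neg (lt_of_not_ge ‹_›)]; ring
    set t : ℝ := -δ * s with ht
    have htabs : |t| = δ := by
      rw [ht, abs_mul, abs_neg, abs_of_pos hδpos, hsabs, mul_one]
    have htG : t * G = -δ * |G| := by rw [ht, mul_assoc, hsG]
    have htsq : t ^ 2 = δ ^ 2 := by rw [← sq_abs, htabs]
    set β' : Fin p → ℝ := fun kk => βs kk + if kk = i then t else 0 with hβ'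
    have hfeas' : ∀ kk, |β' kk| ≤ M := by
      intro kk
      rcases eq_or_ne kk i with hkk | hkk
      · subst hkk
        have h1 : β' kk = βs kk + t := by simp [hβ']
        rw [h1]
        have h2 : |βs kk + t| ≤ |βs kk| + |t| := abs_add_le _ _
        have h3 : δ ≤ M - |βs kk| := min_le_left _ _
        rw [htabs] at h2
        linarith
      · have h1 : β' kk = βs kk := by simp [hβ', hkk]
        rw [h1]; exact hβs kk
    have hres : ∀ j, y j - ∑ kk, X j kk * β' kk = -ρs j - X j i * t := by
      intro j
      have h1 : ∑ kk, X j kk * β' kk = (∑ kk, X j kk * βs kk) + X j i * t := by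
        simp only [hβ', mul_add]
        rw [Finset.sum_add_distrib]
        congr 1
        rw [Finset.sum_congr rfl (fun kk _ => by
          show X j kk * (if kk = i then t else 0) = if kk = i then X j kk * t else 0
          split <;> simp)]
        rw [Finset.sum_ite_eq' Finset.univ i (fun kk => X j kk * t)]
        simp
      rw [h1]
      simp only [hρs]
      ring
    have hF := hmin β' hfeas'
    have eβ' : Fobj n p X y l0 l2 M β'
        = (1/2) * (∑ j, ρs j ^ 2) + t * G + t ^ 2 / 2
          + (∑ kk, c * |βs kk|) + c * (|βs i + t| - |βs i|) := by
      simp only [Fobj]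
      have h1 : ∑ j, (y j - ∑ kk, X j kk * β' kk) ^ 2
          = (∑ j, ρs j ^ 2) + (2 * t) * ∑ j, ρs j * X j i + t ^ 2 * ∑ j, (X j i) ^ 2 := by
        rw [Finset.mul_sum, Finset.mul_sum, ← Finset.sum_add_distrib, ← Finset.sum_add_distrib]
        apply Finset.sum_congr rfl
        intro j _
        rw [hres j]
        ring
      have h2 : ∑ kk, psi l0 l2 M (β' kk)
          = (∑ kk, c * |βs kk|) + c * (|βs i + t| - |βs i|) := by
        have hterm : ∀ kk, psi l0 l2 M (β' kk)
            = c * |βs kk| + (if kk = i then c * (|βs i + t| - |βs i|) else 0) := by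
          intro kk
          rcases eq_or_ne kk i with h | h
          · subst h
            have hv : β' kk = βs kk + t := by simp [hβ']
            rw [hv, hpsi, if_pos rfl]
            ring
          · have hv : β' kk = βs kk := by simp [hβ', h]
            rw [hv, hpsi, if_neg h, add_zero]
        rw [Finset.sum_congr rfl (fun kk _ => hterm kk), Finset.sum_add_distrib,
          Finset.sum_ite_eq' Finset.univ i (fun _ => c * (|βs i + t| - |βs i|))]
        simp
      rw [h1, h2, hXsq i, ← hG]
      ring
    rw [eβs, eβ'] at hF
    have habs : |βs i + t| - |βs i| ≤ δ := by
      have := abs_add_le (βs i) t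
      rw [htabs] at this
      linarith
    have hkey : 0 ≤ t * G + t ^ 2 / 2 + c * (|βs i + t| - |βs i|) := by linarith
    rw [htG, htsq] at hkey
    have hδle : δ ≤ |G| - c := min_le_right _ _
    have h6 : c * (|βs i + t| - |βs i|) ≤ c * δ := mul_le_mul_of_nonneg_left habs hc.le
    have h8 : δ * δ ≤ δ * (|G| - c) := mul_le_mul_of_nonneg_left hδle hδpos.le
    have h9 := mul_pos hδpos (sub_pos.mpr hgt)
    clear_value G δ s t β' c d
    have h7 : 0 ≤ -δ * |G| + δ ^ 2 / 2 + c * δ := by linarith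
    nlinarith [h7, h8, h9]
  -- dual feasibility
  have hfeas : dualFeasible n p X l0 l2 M ρh μh := by
    intro i
    have h1 := le_max_left (|∑ j, ρh j * X j i| - l0 / M - l2 * M) (0:ℝ)
    rw [hμh i]
    linarith
  -- Cauchy-Schwarz consequences
  have hCSd : ∀ f : Fin n → ℝ, |∑ j, d j * f j| ≤ ε * Real.sqrt (∑ j, f j ^ 2) := by
    intro f
    calc |∑ j, d j * f j| ≤ Real.sqrt (∑ j, d j ^ 2) * Real.sqrt (∑ j, f j ^ 2) := cs_abs d f
    _ = ε * Real.sqrt (∑ j, f j ^ 2) := by rw [← hεd]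
  have hdy : |∑ j, d j * y j| ≤ ε := by
    have := hCSd y
    rw [hy, mul_one] at this
    exact this
  have hdX : ∀ i, |∑ j, d j * X j i| ≤ ε := by
    intro i
    have := hCSd (fun j => X j i)
    rw [hX i, mul_one] at this
    exact this
  have hρd : |∑ j, ρs j * d j| ≤ ε := by
    have h1 := cs_abs ρs d
    rw [← hεd] at h1
    have h2 : Real.sqrt (∑ j, ρs j ^ 2) ≤ 1 := by
      have := Real.sqrt_le_sqrt hρsum
      rwa [Real.sqrt_one] at this
    calc |∑ j, ρs j * d j| ≤ Real.sqrt (∑ j, ρs j ^ 2) * ε := h1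
    _ ≤ 1 * ε := mul_le_mul_of_nonneg_right h2 hε0
    _ = ε := one_mul ε
  have hgh_le : ∀ i, |∑ j, ρh j * X j i| ≤ |∑ j, ρs j * X j i| + ε := by
    intro i
    have hsplit : ∑ j, ρh j * X j i = (∑ j, ρs j * X j i) + ∑ j, d j * X j i := by
      rw [← Finset.sum_add_distrib]
      exact Finset.sum_congr rfl fun j _ => by rw [hρh_eq j]; ring
    rw [hsplit]
    calc |(∑ j, ρs j * X j i) + ∑ j, d j * X j i|
        ≤ |∑ j, ρs j * X j i| + |∑ j, d j * X j i| := abs_add_le _ _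
    _ ≤ |∑ j, ρs j * X j i| + ε := by linarith [hdX i]
  -- per-coordinate bound on μh
  have hμi : ∀ i, |μh i| ≤ |μs i| + (if βh i ≠ 0 then ε else 0) := by
    intro i
    by_cases hb : βh i = 0
    · have h1 : |∑ j, ρh j * X j i| ≤ c := by
        have h2 := hopt i hb
        have h3 : ∑ j, ρh j * X j i = -∑ j, (y j - ∑ kk, X j kk * βh kk) * X j i := by
          rw [← Finset.sum_neg_distrib]
          exact Finset.sum_congr rfl fun j _ => by simp only [hρh]; ring
        rw [h3, abs_neg]
        exact h2
      have h4 : μh i = 0 := by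
        rw [hμh i]
        apply max_eq_right
        rw [hcdef] at h1
        linarith
      rw [h4, abs_zero]
      have : (if βh i ≠ 0 then ε else 0) = 0 := by simp [hb]
      rw [this, add_zero]
      exact abs_nonneg _
    · have h1 : μh i ≤ max (|∑ j, ρs j * X j i| - c) 0 + ε := by
        rw [hμh i]
        apply max_le
        · have h2 := hgh_le i
          have h3 := le_max_left (|∑ j, ρs j * X j i| - c) (0:ℝ)
          rw [hcdef] at h3 ⊢
          linarith
        · have h3 := le_max_right (|∑ j, ρs j * X j i| - c) (0:ℝ)
          linarith
      have h2 : max (|∑ j, ρs j * X j i| - c) 0 ≤ |μs i| := by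
        rcases eq_or_ne (|βs i|) M with h | h
        · rw [hμs i, if_pos h]
          apply max_le
          · have h4 := le_abs_self (|∑ j, ρs j * X j i| - l0 / M - l2 * M)
            rw [hcdef]
            linarith
          · exact abs_nonneg _
        · have hlt : |βs i| < M := lt_of_le_of_ne (hβs i) h
          have h5 := hKKT i hlt
          rw [hμs i, if_neg h, abs_zero]
          exact max_le (by linarith) le_rfl
      have h3 : 0 ≤ μh i := by rw [hμh i]; exact le_max_right _ _
      rw [abs_of_nonneg h3]
      have : (if βh i ≠ 0 then ε else 0) = ε := by simp [hb]
      rw [this]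
      linarith
  have hμsum : ∑ i, |μh i| ≤ (∑ i, |μs i|) + ε * k := by
    calc ∑ i, |μh i| ≤ ∑ i, (|μs i| + if βh i ≠ 0 then ε else 0) :=
          Finset.sum_le_sum fun i _ => hμi i
    _ = (∑ i, |μs i|) + ∑ i, (if βh i ≠ 0 then ε else 0) := Finset.sum_add_distrib
    _ = (∑ i, |μs i|) + ε * k := by
        have h1 : ∑ i, (if βh i ≠ 0 then ε else 0)
            = ∑ i ∈ Finset.univ.filter (fun i : Fin p => βh i ≠ 0), ε := by
          rw [Finset.sum_filter]
        rw [h1, Finset.sum_const, hk, nsmul_eq_mul]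
        ring
  -- final computation
  refine ⟨hfeas, ?_⟩
  have hsum1 : ∑ j, ρh j ^ 2 = (∑ j, ρs j ^ 2) + 2 * (∑ j, ρs j * d j) + ε ^ 2 := by
    rw [← hdsq, Finset.mul_sum, ← Finset.sum_add_distrib, ← Finset.sum_add_distrib]
    exact Finset.sum_congr rfl fun j _ => by rw [hρh_eq j]; ring
  have hsum2 : ∑ j, ρh j * y j = (∑ j, ρs j * y j) + ∑ j, d j * y j := by
    rw [← Finset.sum_add_distrib]
    exact Finset.sum_congr rfl fun j _ => by rw [hρh_eq j]; ring
  have hMmul : M * (∑ i, |μh i|) ≤ M * (∑ i, |μs i|) + M * (ε * k) := by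
    have h1 := mul_le_mul_of_nonneg_left hμsum hM.le
    rw [mul_add] at h1
    exact h1
  have hA := abs_le.mp hρd
  have hB := abs_le.mp hdy
  rw [ge_iff_le]
  clear_value c d
  simp only [h2]
  rw [hsum1, hsum2]
  have hexp : ε * (2 + M * (k : ℝ)) = 2 * ε + M * (ε * (k : ℝ)) := by ring
  rw [hexp]
  linarith [hA.2, hB.2, hMmul]
end
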